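/- arXiv:1105.0664 — 8 statements merged into one kernel-verified Lean document; each statement's English description precedes it below -/
import Mathlib

section
/- Let X be a metric space with metric d, and let ν be a σ-finite Borel measure on X assigning finite mass to every ball. Then there exists a positive continuous function f: X → ℝ_{>0} with ∫_X f dν < ∞. -/
open MeasureTheory Set

/-- A σ-finite Borel measure on a metric space assigning finite mass to every ball
admits a positive continuous integrable function. -/
theorem stmt1 {X : Type*} [MetricSpace X] [MeasurableSpace X] [BorelSpace X]
    (ν : Measure X) [SigmaFinite ν]
    (hballs : ∀ (x : X) (r : ℝ), ν (Metric.ball x r) < ⊤) :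
    ∃ f : X → ℝ, Continuous f ∧ (∀ x, 0 < f x) ∧ Integrable f ν := by
  rcases isEmpty_or_nonempty X with hX | ⟨⟨x₀⟩⟩
  · refine ⟨fun _ => 1, continuous_const, fun x => (hX.false x).elim, ?_⟩
    rw [ν.eq_zero_of_isEmpty]
    exact integrable_zero_measure
  -- weights
  set c : ℕ → ℝ := fun n => (2 : ℝ)⁻¹ ^ n / ((ν (Metric.ball x₀ (n + 1))).toReal + 1) with hc
  have hcpos : ∀ n, 0 < c n := fun n =>
    div_pos (by positivity) (by positivity)
  have hcle : ∀ n, c n ≤ (2 : ℝ)⁻¹ ^ n := fun n => by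
    rw [hc]
    exact div_le_of_le_mul₀ (by positivity) (by positivity)
      (le_mul_of_one_le_right (by positivity)
        (by nlinarith [ENNReal.toReal_nonneg (a := ν (Metric.ball x₀ (n + 1)))]))
  have hcsum : Summable c :=
    Summable.of_nonneg_of_le (fun n => (hcpos n).le) hcle
      (summable_geometric_of_lt_one (by norm_num) (by norm_num))
  -- bump functions
  set φ : ℕ → ℝ → ℝ := fun n t => max 0 (min 1 ((n : ℝ) + 1 - t)) with hφ
  have hφ0 : ∀ n t, 0 ≤ φ n t := fun n t => le_max_left _ _
  have hφ1 : ∀ n t, φ n t ≤ 1 := fun n t =>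
    max_le zero_le_one (min_le_left _ _)
  have hφcont : ∀ n, Continuous (φ n) := fun n =>
    continuous_const.max (continuous_const.min (by continuity))
  have hφzero : ∀ (n : ℕ) (t : ℝ), (n : ℝ) + 1 ≤ t → φ n t = 0 := fun n t ht => by
    simp only [hφ]
    simp only [max_eq_left_iff]
    exact min_le_of_right_le (by linarith)
  have hφone : ∀ (n : ℕ) (t : ℝ), t ≤ (n : ℝ) → φ n t = 1 := fun n t ht => by
    simp only [hφ]
    rw [min_eq_left (by linarith)]
    exact max_eq_right zero_le_one
  -- terms
  set F : ℕ → X → ℝ := fun n x => c n * φ n (dist x x₀) with hF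
  have hF0 : ∀ n x, 0 ≤ F n x := fun n x => mul_nonneg (hcpos n).le (hφ0 _ _)
  have hFle : ∀ n x, F n x ≤ c n := fun n x =>
    mul_le_of_le_one_right (hcpos n).le (hφ1 _ _)
  have hFsum : ∀ x, Summable fun n => F n x := fun x =>
    Summable.of_nonneg_of_le (fun n => hF0 n x) (fun n => hFle n x) hcsum
  refine ⟨fun x => ∑' n, F n x, ?_, ?_, ?_⟩
  · -- continuity
    refine continuous_tsum (fun n => continuous_const.mul ((hφcont n).comp (continuous_id.dist continuous_const))) hcsum ?_
    intro n x
    rw [Real.norm_of_nonneg (hF0 n x)]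
    exact hFle n x
  · -- positivity
    intro x
    have hn : dist x x₀ ≤ (⌈dist x x₀⌉₊ : ℝ) := Nat.le_ceil _
    have h1 : F ⌈dist x x₀⌉₊ x = c ⌈dist x x₀⌉₊ := by
      simp only [hF]
      rw [hφone _ _ hn, mul_one]
    calc (0 : ℝ) < c ⌈dist x x₀⌉₊ := hcpos _
      _ = F ⌈dist x x₀⌉₊ x := h1.symm
      _ ≤ ∑' n, F n x := Summable.le_tsum (hFsum x) _ fun j _ => hF0 j x
  · -- integrability
    have hmeas : ∀ n, Measurable (F n) := fun n =>
      (continuous_const.mul ((hφcont n).comp (continuous_id.dist continuous_const))).measurable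
    have hcont : Continuous (fun x => ∑' n, F n x) := by
      refine continuous_tsum (fun n => continuous_const.mul ((hφcont n).comp (continuous_id.dist continuous_const))) hcsum ?_
      intro n x
      rw [Real.norm_of_nonneg (hF0 n x)]
      exact hFle n x
    refine ⟨hcont.aestronglyMeasurable, ?_⟩
    rw [hasFiniteIntegral_iff_norm]
    have key : ∀ x : X, ENNReal.ofReal ‖∑' n, F n x‖ = ∑' n, ENNReal.ofReal (F n x) := by
      intro x
      rw [Real.norm_of_nonneg (tsum_nonneg fun n => hF0 n x)]
      exact ENNReal.ofReal_tsum_of_nonneg (fun n => hF0 n x) (hFsum x)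
    calc ∫⁻ x, ENNReal.ofReal ‖∑' n, F n x‖ ∂ν
        = ∫⁻ x, ∑' n, ENNReal.ofReal (F n x) ∂ν := by
          exact lintegral_congr fun x => key x
      _ = ∑' n, ∫⁻ x, ENNReal.ofReal (F n x) ∂ν :=
          lintegral_tsum fun n => ((hmeas n).ennreal_ofReal).aemeasurable
      _ ≤ ∑' n, ENNReal.ofReal ((2 : ℝ)⁻¹ ^ n) := by
          refine ENNReal.tsum_le_tsum fun n => ?_
          have hb : ∀ x : X, ENNReal.ofReal (F n x) ≤
              (Metric.ball x₀ ((n : ℝ) + 1)).indicator (fun _ => ENNReal.ofReal (c n)) x := by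
            intro x
            by_cases hx : x ∈ Metric.ball x₀ ((n : ℝ) + 1)
            · rw [indicator_of_mem hx]
              exact ENNReal.ofReal_le_ofReal (hFle n x)
            · rw [indicator_of_notMem hx]
              have : (n : ℝ) + 1 ≤ dist x x₀ := by
                simpa [Metric.mem_ball, not_lt] using hx
              have hz : F n x = 0 := by
                simp only [hF]; rw [hφzero n _ this]; ring
              simp [hz]
          calc ∫⁻ x, ENNReal.ofReal (F n x) ∂ν
              ≤ ∫⁻ x, (Metric.ball x₀ ((n : ℝ) + 1)).indicator (fun _ => ENNReal.ofReal (c n)) x ∂ν :=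
                lintegral_mono hb
            _ = ENNReal.ofReal (c n) * ν (Metric.ball x₀ ((n : ℝ) + 1)) := by
                rw [lintegral_indicator measurableSet_ball]
                simp [mul_comm]
            _ ≤ ENNReal.ofReal (c n) * ENNReal.ofReal ((ν (Metric.ball x₀ ((n : ℝ) + 1))).toReal + 1) := by
                refine mul_le_mul_right ?_ _
                exact le_trans (le_of_eq (ENNReal.ofReal_toReal (hballs x₀ ((n : ℝ) + 1)).ne).symm)
                  (ENNReal.ofReal_le_ofReal (by linarith))
            _ = ENNReal.ofReal ((2 : ℝ)⁻¹ ^ n) := by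
                rw [← ENNReal.ofReal_mul (hcpos n).le]
                congr 1
                rw [hc]
                field_simp
      _ < ⊤ := by
          have : (Summable fun n => (2 : ℝ)⁻¹ ^ n) :=
            summable_geometric_of_lt_one (by norm_num) (by norm_num)
          exact lt_of_le_of_lt (le_of_eq rfl)
            (by
              rw [← ENNReal.ofReal_tsum_of_nonneg (fun n => by positivity) this]
              exact ENNReal.ofReal_lt_top)
end

section
/- Let G be a group acting on a standard Borel space X by measurable transformations, and ρ a positive cocycle over the action, measurable in x for each g. If ν₁, ν₂ are probability measures with Radon–Nikodym cocycle ρ and both are weakly indecomposable (every Borel set A with ν(A △ T_g A) = 0 for all g has measure 0 or 1), then either ν₁ = ν₂ or ν₁ ⊥ ν₂. -/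
open MeasureTheory Set ENNReal

lemma aux_invar {X : Type*} [MeasurableSpace X] (S : X ≃ᵐ X)
    (ν μ : Measure X) [IsFiniteMeasure ν] [IsFiniteMeasure μ]
    (w : X → ℝ≥0∞) (hw : Measurable w) (hw0 : ∀ x, w x ≠ 0) (hwt : ∀ x, w x ≠ ∞)
    (hν : ν.map S = ν.withDensity w) (hμ : μ.map S = μ.withDensity w) :
    (fun x => ν.rnDeriv μ (S x)) =ᵐ[μ] ν.rnDeriv μ := by
  have hwa : AEMeasurable w μ := hw.aemeasurable
  have hE := (S.measurableEmbedding).rnDeriv_map ν μ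
  rw [hν, hμ] at hE
  have hfin : SigmaFinite (μ.withDensity w) :=
    SigmaFinite.withDensity_of_ne_top (ae_of_all _ hwt)
  have h2 : (ν.withDensity w).rnDeriv (μ.withDensity w) =ᵐ[μ] ν.rnDeriv μ := by
    have hacμ : μ ≪ μ.withDensity w :=
      withDensity_absolutelyContinuous' hwa (ae_of_all _ hw0)
    have hleft := Measure.rnDeriv_withDensity_left (μ := ν) (ν := μ.withDensity w)
      hw.aemeasurable (ae_of_all _ hwt)
    have hright := Measure.rnDeriv_withDensity_right ν μ hwa (ae_of_all _ hw0) (ae_of_all _ hwt)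
    have hleft' := hacμ.ae_eq hleft
    filter_upwards [hleft', hright] with x hx1 hx2
    rw [hx1, hx2, ← mul_assoc, ENNReal.mul_inv_cancel (hw0 x) (hwt x), one_mul]
  have h3 : ∀ᵐ x ∂μ, (ν.withDensity w).rnDeriv (μ.withDensity w) (S x) = ν.rnDeriv μ (S x) := by
    have hac : (μ.withDensity w) ≪ μ := withDensity_absolutelyContinuous _ _
    have h2' := hac.ae_eq h2
    have h2'' : (ν.withDensity w).rnDeriv (μ.withDensity w) =ᵐ[Measure.map S μ] ν.rnDeriv μ := by
      rw [hμ]; exact h2'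
    exact (S.measurableEmbedding.ae_map_iff).mp h2''
  filter_upwards [hE, h3] with x hx1 hx2
  rw [← hx1, hx2]

/-- Two weakly indecomposable probability measures with the same Radon–Nikodym cocycle
are either equal or mutually singular. -/
theorem stmt2 {G X : Type*} [Group G] [MeasurableSpace X] [StandardBorelSpace X]
    (T : G → X → X) (hTmeas : ∀ g, Measurable (T g))
    (hTbij : ∀ g, Function.Bijective (T g))
    (hT1 : ∀ x, T 1 x = x) (hTmul : ∀ g h x, T (g * h) x = T g (T h x))
    (ρ : G → X → ℝ) (hρmeas : ∀ g, Measurable (ρ g)) (hρpos : ∀ g x, 0 < ρ g x)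
    (hρcoc : ∀ g h x, ρ (g * h) x = ρ g (T h x) * ρ h x)
    (ν₁ ν₂ : Measure X) [IsProbabilityMeasure ν₁] [IsProbabilityMeasure ν₂]
    (h₁ : ∀ g, ∀ A : Set X, MeasurableSet A →
      ν₁ (T g '' A) = ∫⁻ x in A, ENNReal.ofReal (ρ g x) ∂ν₁)
    (h₂ : ∀ g, ∀ A : Set X, MeasurableSet A →
      ν₂ (T g '' A) = ∫⁻ x in A, ENNReal.ofReal (ρ g x) ∂ν₂)
    (hindec₁ : ∀ A : Set X, MeasurableSet A →
      (∀ g, ν₁ (symmDiff A (T g '' A)) = 0) → ν₁ A = 0 ∨ ν₁ A = 1)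
    (hindec₂ : ∀ A : Set X, MeasurableSet A →
      (∀ g, ν₂ (symmDiff A (T g '' A)) = 0) → ν₂ A = 0 ∨ ν₂ A = 1) :
    ν₁ = ν₂ ∨ ν₁.MutuallySingular ν₂ := by
  -- basic data
  set w : G → X → ℝ≥0∞ := fun g x => ENNReal.ofReal (ρ g x) with hw_def
  have hwmeas : ∀ g, Measurable (w g) := fun g => ENNReal.measurable_ofReal.comp (hρmeas g)
  have hw0 : ∀ g x, w g x ≠ 0 := fun g x => ne_of_gt (ENNReal.ofReal_pos.2 (hρpos g x))
  have hwt : ∀ g x, w g x ≠ ∞ := fun g x => ENNReal.ofReal_ne_top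
  have hinvL : ∀ (g : G) (x : X), T g⁻¹ (T g x) = x := fun g x => by
    rw [← hTmul, inv_mul_cancel, hT1]
  have hinvR : ∀ (g : G) (x : X), T g (T g⁻¹ x) = x := fun g x => by
    rw [← hTmul, mul_inv_cancel, hT1]
  let S : G → X ≃ᵐ X := fun g =>
    { toEquiv := ⟨T g, T g⁻¹, hinvL g, hinvR g⟩
      measurable_toFun := hTmeas g
      measurable_invFun := hTmeas g⁻¹ }
  set μ : Measure X := ν₁ + ν₂ with hμdef
  have hν₁μ : ν₁ ≪ μ := (Measure.le_add_right le_rfl).absolutelyContinuous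
  have hν₂μ : ν₂ ≪ μ := (Measure.le_add_left le_rfl).absolutelyContinuous
  -- map identities
  have hmap : ∀ (ν : Measure X),
      (∀ g (A : Set X), MeasurableSet A → ν (T g '' A) = ∫⁻ x in A, w g x ∂ν) →
      ∀ g : G, ν.map (T g) = ν.withDensity (w g⁻¹) := by
    intro ν hν g
    ext s hs
    rw [Measure.map_apply (hTmeas g) hs, withDensity_apply _ hs, ← hν g⁻¹ s hs]
    congr 1
    ext x
    constructor
    · intro hx
      exact ⟨T g x, hx, hinvL g x⟩
    · rintro ⟨y, hy, rfl⟩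
      simpa [hinvR g y] using hy
  have hmap₁ : ∀ g : G, ν₁.map (T g) = ν₁.withDensity (w g⁻¹) := hmap ν₁ h₁
  have hmap₂ : ∀ g : G, ν₂.map (T g) = ν₂.withDensity (w g⁻¹) := hmap ν₂ h₂
  have hmapμ : ∀ g : G, μ.map (T g) = μ.withDensity (w g⁻¹) := by
    intro g
    rw [hμdef, Measure.map_add _ _ (hTmeas g), withDensity_add_measure, hmap₁ g, hmap₂ g]
  -- invariance of RN derivatives
  set D₁ : X → ℝ≥0∞ := ν₁.rnDeriv μ with hD₁def
  set D₂ : X → ℝ≥0∞ := ν₂.rnDeriv μ with hD₂def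
  have hD₁meas : Measurable D₁ := Measure.measurable_rnDeriv _ _
  have hD₂meas : Measurable D₂ := Measure.measurable_rnDeriv _ _
  have hDinv₁ : ∀ g : G, (fun x => D₁ (T g x)) =ᵐ[μ] D₁ := fun g =>
    aux_invar (S g) ν₁ μ (w g⁻¹) (hwmeas _) (hw0 _) (hwt _) (hmap₁ g) (hmapμ g)
  have hDinv₂ : ∀ g : G, (fun x => D₂ (T g x)) =ᵐ[μ] D₂ := fun g =>
    aux_invar (S g) ν₂ μ (w g⁻¹) (hwmeas _) (hw0 _) (hwt _) (hmap₂ g) (hmapμ g)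
  -- the two comparison sets
  have hmain : ∀ (A : Set X), A = {x | D₂ x < D₁ x} ∨ A = {x | D₁ x < D₂ x} →
      ∀ g : G, μ (symmDiff A (T g '' A)) = 0 := by
    intro A hA g
    have himg : T g '' A = (fun x => T g⁻¹ x) ⁻¹' A := by
      ext x
      constructor
      · rintro ⟨y, hy, rfl⟩
        simpa [Set.mem_preimage, hinvL g y] using hy
      · intro hx
        exact ⟨T g⁻¹ x, hx, hinvR g x⟩
    have hsub : symmDiff A (T g '' A) ⊆
        {x | D₁ (T g⁻¹ x) ≠ D₁ x} ∪ {x | D₂ (T g⁻¹ x) ≠ D₂ x} := by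
      rw [himg]
      intro x hx
      by_contra hcon
      simp only [Set.mem_union, Set.mem_setOf_eq, not_or, not_ne_iff] at hcon
      obtain ⟨e1, e2⟩ := hcon
      rcases Set.mem_symmDiff.mp hx with ⟨h1, h2⟩ | ⟨h1, h2⟩ <;>
        rcases hA with rfl | rfl <;>
        refine h2 ?_ <;>
        simp only [Set.mem_preimage, Set.mem_setOf_eq, e1, e2] at h1 ⊢ <;>
        exact h1
    refine measure_mono_null hsub (measure_union_null ?_ ?_)
    · exact ae_iff.mp (hDinv₁ g⁻¹)
    · exact ae_iff.mp (hDinv₂ g⁻¹)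
  -- set integral identities
  have hset₁ : ∀ s : Set X, ν₁ s = ∫⁻ x in s, D₁ x ∂μ := fun s =>
    (Measure.setLIntegral_rnDeriv hν₁μ s).symm
  have hset₂ : ∀ s : Set X, ν₂ s = ∫⁻ x in s, D₂ x ∂μ := fun s =>
    (Measure.setLIntegral_rnDeriv hν₂μ s).symm
  -- comparison lemma: on a set where Dl < Dh pointwise, equal integrals force null set
  have hkey : ∀ (Dl Dh : X → ℝ≥0∞), Measurable Dh → ∀ s : Set X, MeasurableSet s →
      (∀ x ∈ s, Dl x < Dh x) → (∫⁻ x in s, Dl x ∂μ ≠ ∞) →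
      (∫⁻ x in s, Dh x ∂μ ≤ ∫⁻ x in s, Dl x ∂μ) → μ s = 0 := by
    intro Dl Dh hDh s hs hlt hfin hle
    have hmem := ae_restrict_mem (μ := μ) hs
    have hlel : Dl ≤ᵐ[μ.restrict s] Dh := by
      filter_upwards [hmem] with x hx using (hlt x hx).le
    have heq : Dl =ᵐ[μ.restrict s] Dh :=
      ae_eq_of_ae_le_of_lintegral_le hlel hfin hDh.aemeasurable hle
    have hfalse : ∀ᵐ x ∂μ.restrict s, False := by
      filter_upwards [heq, hmem] with x hx1 hx2
      exact absurd hx1 (ne_of_lt (hlt x hx2))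
    have := ae_iff.mp hfalse
    simpa using this
  set A : Set X := {x | D₂ x < D₁ x} with hAdef
  set B : Set X := {x | D₁ x < D₂ x} with hBdef
  have hAmeas : MeasurableSet A := measurableSet_lt hD₂meas hD₁meas
  have hBmeas : MeasurableSet B := measurableSet_lt hD₁meas hD₂meas
  have hAinv := hmain A (Or.inl rfl)
  have hBinv := hmain B (Or.inr rfl)
  have hA₁ := hindec₁ A hAmeas (fun g => hν₁μ (hAinv g))
  have hA₂ := hindec₂ A hAmeas (fun g => hν₂μ (hAinv g))
  have hB₁ := hindec₁ B hBmeas (fun g => hν₁μ (hBinv g))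
  have hB₂ := hindec₂ B hBmeas (fun g => hν₂μ (hBinv g))
  -- ν₂ A = 0 always
  have hν₂A : ν₂ A = 0 := by
    rcases hA₂ with h | h
    · exact h
    · exfalso
      have hle : ν₂ A ≤ ν₁ A := by
        rw [hset₁, hset₂]
        refine lintegral_mono_ae ?_
        filter_upwards [ae_restrict_mem hAmeas] with x hx using (hx : D₂ x < D₁ x).le
      have hν₁A : ν₁ A = 1 := le_antisymm prob_le_one (h ▸ hle)
      have hμA : μ A = 0 := by
        refine hkey D₂ D₁ hD₁meas A hAmeas (fun x hx => hx) ?_ ?_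
        · rw [← hset₂]; exact measure_ne_top _ _
        · rw [← hset₁, ← hset₂, hν₁A, h]
      have : ν₂ A = 0 := hν₂μ hμA
      rw [h] at this
      exact one_ne_zero this
  -- ν₁ B = 0 always
  have hν₁B : ν₁ B = 0 := by
    rcases hB₁ with h | h
    · exact h
    · exfalso
      have hle : ν₁ B ≤ ν₂ B := by
        rw [hset₁, hset₂]
        refine lintegral_mono_ae ?_
        filter_upwards [ae_restrict_mem hBmeas] with x hx using (hx : D₁ x < D₂ x).le
      have hν₂B : ν₂ B = 1 := le_antisymm prob_le_one (h ▸ hle)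
      have hμB : μ B = 0 := by
        refine hkey D₁ D₂ hD₂meas B hBmeas (fun x hx => hx) ?_ ?_
        · rw [← hset₁]; exact measure_ne_top _ _
        · rw [← hset₁, ← hset₂, hν₂B, h]
      have : ν₁ B = 0 := hν₁μ hμB
      rw [h] at this
      exact one_ne_zero this
  rcases hA₁ with hA₁0 | hA₁1
  · rcases hB₂ with hB₂0 | hB₂1
    · -- both null: measures are equal
      left
      have hμA : μ A = 0 := by
        rw [hμdef]; simp [Measure.add_apply, hA₁0, hν₂A]
      have hμB : μ B = 0 := by
        rw [hμdef]; simp [Measure.add_apply, hν₁B, hB₂0]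
      have hae : D₁ =ᵐ[μ] D₂ := by
        have hsub : {x | D₁ x ≠ D₂ x} ⊆ A ∪ B := by
          intro x hx
          rcases lt_or_gt_of_ne (hx : D₁ x ≠ D₂ x) with h | h
          · exact Or.inr h
          · exact Or.inl h
        exact measure_mono_null hsub (measure_union_null hμA hμB)
      calc ν₁ = μ.withDensity D₁ := (Measure.withDensity_rnDeriv_eq ν₁ μ hν₁μ).symm
        _ = μ.withDensity D₂ := withDensity_congr_ae hae
        _ = ν₂ := Measure.withDensity_rnDeriv_eq ν₂ μ hν₂μ
    · -- ν₂ B = 1 : mutually singular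
      right
      refine ⟨B, hBmeas, hν₁B, ?_⟩
      rw [← prob_compl_eq_zero_iff hBmeas] at hB₂1
      exact hB₂1
  · -- ν₁ A = 1 : mutually singular
    right
    refine ⟨Aᶜ, hAmeas.compl, ?_, ?_⟩
    · rw [prob_compl_eq_zero_iff hAmeas]; exact hA₁1
    · rw [compl_compl]; exact hν₂A
end

section
/- Let G be a group acting measurably on a standard Borel space X, and ρ a positive cocycle measurable in x for each g. A probability measure ν with Radon–Nikodym cocycle ρ is strongly indecomposable (i.e. ν = αν₁ + (1-α)ν₂ with α ∈ (0,1) and ν₁, ν₂ having cocycle ρ implies ν = ν₁ = ν₂) if and only if it is weakly indecomposable (every Borel set A with ν(A △ T_g A) = 0 for all g ∈ G has ν(A) ∈ {0,1}). -/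
/-!
If `ν` splits along an a.e.-invariant set `A` with `0 < ν A < 1`, the normalised restrictions
`ν[|A]` and `ν[|Aᶜ]` again have cocycle `ρ`, so `ν` is not strongly indecomposable.
Conversely, if `ν = α ν₁ + (1 - α) ν₂`, then `νᵢ ≪ ν`, and because `νᵢ` and `ν` share the
cocycle, the density `dνᵢ/dν` is a.e. invariant under every `T g`. Its level sets are then
a.e.-invariant, so weak indecomposability forces it to be a.e. constant, and the constant is `1`
since both measures are probability measures.
-/

open MeasureTheory Set Function Filter
open ProbabilityTheory
open scoped ENNReal

section

variable {ι X : Type*} [MeasurableSpace X]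

def HasRNCocycle (T : ι → X → X) (ρ : ι → X → ℝ) (μ : Measure X) : Prop :=
  ∀ g, ∀ A : Set X, MeasurableSet A → μ (T g '' A) = ∫⁻ x in A, ENNReal.ofReal (ρ g x) ∂μ

def IsAEInvariantSet (T : ι → X → X) (μ : Measure X) (A : Set X) : Prop :=
  ∀ g, μ (symmDiff A (T g '' A)) = 0

def IsWeaklyIndecomposable (T : ι → X → X) (μ : Measure X) : Prop :=
  ∀ A : Set X, MeasurableSet A → IsAEInvariantSet T μ A → μ A = 0 ∨ μ A = 1

def IsStronglyIndecomposable (T : ι → X → X) (ρ : ι → X → ℝ) (μ : Measure X) : Prop :=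
  ∀ α : ℝ, α ∈ Ioo (0 : ℝ) 1 → ∀ μ₁ μ₂ : Measure X,
    IsProbabilityMeasure μ₁ → IsProbabilityMeasure μ₂ →
    HasRNCocycle T ρ μ₁ → HasRNCocycle T ρ μ₂ →
    μ = ENNReal.ofReal α • μ₁ + ENNReal.ofReal (1 - α) • μ₂ → μ₁ = μ ∧ μ₂ = μ

variable {T : ι → X → X} {ρ : ι → X → ℝ} {μ μ' : Measure X}

theorem IsAEInvariantSet.compl (hT : ∀ g, Bijective (T g)) {A : Set X}
    (hA : IsAEInvariantSet T μ A) : IsAEInvariantSet T μ Aᶜ := by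
  intro g
  rw [image_compl_eq (hT g), compl_symmDiff_compl]
  exact hA g

theorem ProbabilityTheory.eq_smul_cond_add_smul_cond_compl [IsFiniteMeasure μ] {s : Set X}
    (hs : MeasurableSet s) : μ = μ s • μ[|s] + μ sᶜ • μ[|sᶜ] := by
  ext t
  simp only [Measure.add_apply, Measure.smul_apply, smul_eq_mul]
  rw [mul_comm (μ s), mul_comm (μ sᶜ), cond_add_cond_compl_eq hs]

namespace HasRNCocycle

theorem smul (h : HasRNCocycle T ρ μ) (c : ℝ≥0∞) : HasRNCocycle T ρ (c • μ) := by
  intro g A hA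
  rw [Measure.smul_apply, h g A hA, Measure.restrict_smul, lintegral_smul_measure, smul_eq_mul]

theorem restrict (h : HasRNCocycle T ρ μ) (hT : ∀ g, Injective (T g)) {S : Set X}
    (hS : MeasurableSet S) (hSinv : IsAEInvariantSet T μ S) :
    HasRNCocycle T ρ (μ.restrict S) := by
  intro g B hB
  rw [Measure.restrict_apply' hS, Measure.restrict_restrict hB, ← h g _ (hB.inter hS),
    image_inter (hT g)]
  exact measure_congr <| ae_eq_set_inter (ae_eq_refl _) <|
    measure_symmDiff_eq_zero_iff.mp (hSinv g)

theorem cond (h : HasRNCocycle T ρ μ) (hT : ∀ g, Injective (T g)) {S : Set X}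
    (hS : MeasurableSet S) (hSinv : IsAEInvariantSet T μ S) : HasRNCocycle T ρ μ[|S] :=
  (h.restrict hT hS hSinv).smul _

theorem measure_image_eq_zero (h : HasRNCocycle T ρ μ) (g : ι) {N : Set X} (hN : μ N = 0) :
    μ (T g '' N) = 0 := by
  refine measure_mono_null (image_mono (subset_toMeasurable μ N)) ?_
  rw [h g _ (measurableSet_toMeasurable μ N)]
  exact setLIntegral_measure_zero _ _ (by rwa [measure_toMeasurable])

theorem map_withDensity (h : HasRNCocycle T ρ μ) {g : ι} (hTm : Measurable (T g))
    (hTs : Surjective (T g)) :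
    (μ.withDensity fun x => ENNReal.ofReal (ρ g x)).map (T g) = μ := by
  ext S hS
  rw [Measure.map_apply hTm hS, withDensity_apply _ (hTm hS), ← h g _ (hTm hS),
    image_preimage_eq S hTs]

theorem setLIntegral_image (h : HasRNCocycle T ρ μ) {g : ι} (hT : MeasurableEmbedding (T g))
    (hTs : Surjective (T g)) (hρ : Measurable (ρ g)) {f : X → ℝ≥0∞} (hf : Measurable f)
    {B : Set X} (hB : MeasurableSet B) :
    ∫⁻ y in T g '' B, f y ∂μ = ∫⁻ x in B, f (T g x) * ENNReal.ofReal (ρ g x) ∂μ := by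
  conv_lhs => rw [← h.map_withDensity hT.measurable hTs]
  rw [setLIntegral_map (hT.measurableSet_image.2 hB) hf hT.measurable,
    preimage_image_eq B hT.injective, restrict_withDensity hB]
  exact (lintegral_withDensity_eq_lintegral_mul _ hρ.ennreal_ofReal (hf.comp hT.measurable)).trans
    (lintegral_congr fun x => mul_comm _ _)

theorem rnDeriv_comp_ae_eq [SigmaFinite μ] [SigmaFinite μ'] (h : HasRNCocycle T ρ μ)
    (h' : HasRNCocycle T ρ μ') (hac : μ' ≪ μ) (g : ι) (hT : MeasurableEmbedding (T g))
    (hTs : Surjective (T g)) (hρm : Measurable (ρ g)) (hρpos : ∀ x, 0 < ρ g x) :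
    μ'.rnDeriv μ ∘ T g =ᵐ[μ] μ'.rnDeriv μ := by
  set f := μ'.rnDeriv μ
  have hf : Measurable f := Measure.measurable_rnDeriv μ' μ
  have hw : Measurable fun x => ENNReal.ofReal (ρ g x) := hρm.ennreal_ofReal
  have hfw : (fun x => f (T g x) * ENNReal.ofReal (ρ g x)) =ᵐ[μ]
      fun x => f x * ENNReal.ofReal (ρ g x) := by
    -- over any `B`, both sides integrate to `μ' (T g '' B)`
    refine ae_eq_of_forall_setLIntegral_eq_of_sigmaFinite
      ((hf.comp hT.measurable).mul hw) (hf.mul hw) fun B hB _ => ?_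
    have hwd : μ.withDensity f = μ' := Measure.withDensity_rnDeriv_eq μ' μ hac
    rw [← h.setLIntegral_image hT hTs hρm hf hB,
      ← withDensity_apply _ (hT.measurableSet_image.2 hB), hwd, h' g B hB, ← hwd,
      restrict_withDensity hB, lintegral_withDensity_eq_lintegral_mul _ hf hw]
    rfl
  filter_upwards [hfw] with x hx
  exact (ENNReal.mul_left_inj (ENNReal.ofReal_pos.2 (hρpos x)).ne' ENNReal.ofReal_ne_top).mp hx

theorem isAEInvariantSet_preimage (h : HasRNCocycle T ρ μ) (hTs : ∀ g, Surjective (T g))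
    {β : Type*} {f : X → β} (hf : ∀ g, f ∘ T g =ᵐ[μ] f) (S : Set β) :
    IsAEInvariantSet T μ (f ⁻¹' S) := by
  intro g
  refine measure_mono_null ?_ (h.measure_image_eq_zero g (ae_iff.mp (hf g)))
  rintro y (⟨hyS, hy⟩ | ⟨⟨x, hxS, rfl⟩, hyS⟩)
  · obtain ⟨x, rfl⟩ := hTs g y
    exact ⟨x, fun hx : f (T g x) = f x => hy ⟨x, show f x ∈ S from hx ▸ hyS, rfl⟩, rfl⟩
  · exact ⟨x, fun hx : f (T g x) = f x => hyS (show f (T g x) ∈ S from hx ▸ hxS), rfl⟩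

end HasRNCocycle

theorem IsStronglyIndecomposable.isWeaklyIndecomposable [IsProbabilityMeasure μ]
    (hμ : IsStronglyIndecomposable T ρ μ) (h : HasRNCocycle T ρ μ) (hT : ∀ g, Bijective (T g)) :
    IsWeaklyIndecomposable T μ := by
  intro A hA hAinv
  by_contra! ⟨hA0, hA1⟩
  have hAc0 : μ Aᶜ ≠ 0 := by
    rw [prob_compl_eq_one_sub hA]
    exact (tsub_pos_of_lt (prob_le_one.lt_of_ne hA1)).ne'
  set α := (μ A).toReal
  have hαA : ENNReal.ofReal α = μ A := ENNReal.ofReal_toReal (measure_ne_top μ A)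
  have hαAc : ENNReal.ofReal (1 - α) = μ Aᶜ := by
    rw [ENNReal.ofReal_sub _ ENNReal.toReal_nonneg, hαA, ENNReal.ofReal_one,
      prob_compl_eq_one_sub hA]
  have hα : α ∈ Ioo 0 1 :=
    ⟨ENNReal.toReal_pos hA0 (measure_ne_top μ A),
      sub_pos.1 (ENNReal.ofReal_pos.1 (pos_iff_ne_zero.2 (hαAc ▸ hAc0)))⟩
  have hcond := hμ α hα μ[|A] μ[|Aᶜ] (cond_isProbabilityMeasure hA0)
    (cond_isProbabilityMeasure hAc0)
    (h.cond (fun g => (hT g).1) hA hAinv) (h.cond (fun g => (hT g).1) hA.compl (hAinv.compl hT))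
    (by rw [hαA, hαAc]; exact eq_smul_cond_add_smul_cond_compl hA)
  exact hA1 (hcond.1 ▸ cond_apply_self hA0 (measure_ne_top μ A))

namespace IsWeaklyIndecomposable

theorem ae_eq_const_of_ae_eq_comp [IsProbabilityMeasure μ] (hμ : IsWeaklyIndecomposable T μ)
    (h : HasRNCocycle T ρ μ) (hTs : ∀ g, Surjective (T g)) {β : Type*} [Nonempty β]
    [MeasurableSpace β] [MeasurableSpace.CountablySeparated β] {f : X → β} (hfm : Measurable f)
    (hf : ∀ g, f ∘ T g =ᵐ[μ] f) : ∃ c, f =ᵐ[μ] const X c := by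
  refine exists_eventuallyEq_const_of_forall_separating MeasurableSet fun U hU => ?_
  rcases hμ _ (hfm hU) (h.isAEInvariantSet_preimage hTs hf U) with h0 | h1
  · exact Or.inr (measure_eq_zero_iff_ae_notMem.mp h0)
  · exact Or.inl <|
      (ae_iff_measure_eq (hfm hU).nullMeasurableSet).mpr (h1.trans measure_univ.symm)

theorem eq_of_absolutelyContinuous [StandardBorelSpace X] [IsProbabilityMeasure μ]
    [IsProbabilityMeasure μ'] (hμ : IsWeaklyIndecomposable T μ) (h : HasRNCocycle T ρ μ)
    (h' : HasRNCocycle T ρ μ') (hac : μ' ≪ μ) (hTm : ∀ g, Measurable (T g))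
    (hT : ∀ g, Bijective (T g)) (hρm : ∀ g, Measurable (ρ g)) (hρpos : ∀ g x, 0 < ρ g x) :
    μ' = μ := by
  have hTe (g : ι) : MeasurableEmbedding (T g) := (hTm g).measurableEmbedding (hT g).1
  obtain ⟨c, hc⟩ := hμ.ae_eq_const_of_ae_eq_comp h (fun g => (hT g).2)
    (Measure.measurable_rnDeriv μ' μ)
    fun g => h.rnDeriv_comp_ae_eq h' hac g (hTe g) (hT g).2 (hρm g) (hρpos g)
  have hμ' : μ' = c • μ := by
    rw [← Measure.withDensity_rnDeriv_eq μ' μ hac, withDensity_congr_ae hc]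
    exact withDensity_const c
  have hc1 : 1 = c := by simpa using congrArg (fun m : Measure X => m univ) hμ'
  rw [hμ', ← hc1, one_smul]

theorem isStronglyIndecomposable [StandardBorelSpace X] [IsProbabilityMeasure μ]
    (hμ : IsWeaklyIndecomposable T μ) (h : HasRNCocycle T ρ μ) (hTm : ∀ g, Measurable (T g))
    (hT : ∀ g, Bijective (T g)) (hρm : ∀ g, Measurable (ρ g)) (hρpos : ∀ g x, 0 < ρ g x) :
    IsStronglyIndecomposable T ρ μ := by
  intro α hα μ₁ μ₂ _ _ h₁ h₂ hdec
  have hα₁ : ENNReal.ofReal α ≠ 0 := (ENNReal.ofReal_pos.2 hα.1).ne'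
  have hα₂ : ENNReal.ofReal (1 - α) ≠ 0 := (ENNReal.ofReal_pos.2 (sub_pos.2 hα.2)).ne'
  have hac₁ : μ₁ ≪ μ := hdec ▸ (Measure.absolutelyContinuous_smul hα₁).add_right _
  have hac₂ : μ₂ ≪ μ := hdec ▸ (Measure.absolutelyContinuous_smul hα₂).add_right' _
  exact ⟨hμ.eq_of_absolutelyContinuous h h₁ hac₁ hTm hT hρm hρpos,
    hμ.eq_of_absolutelyContinuous h h₂ hac₂ hTm hT hρm hρpos⟩

end IsWeaklyIndecomposable

theorem isStronglyIndecomposable_iff_isWeaklyIndecomposable [StandardBorelSpace X]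
    [IsProbabilityMeasure μ] (h : HasRNCocycle T ρ μ) (hTm : ∀ g, Measurable (T g))
    (hT : ∀ g, Bijective (T g)) (hρm : ∀ g, Measurable (ρ g)) (hρpos : ∀ g x, 0 < ρ g x) :
    IsStronglyIndecomposable T ρ μ ↔ IsWeaklyIndecomposable T μ :=
  ⟨fun hμ => hμ.isWeaklyIndecomposable h hT,
    fun hμ => hμ.isStronglyIndecomposable h hTm hT hρm hρpos⟩

end

theorem stmt3_general {G X : Type*} [MeasurableSpace X] [StandardBorelSpace X]
    (T : G → X → X) (hTmeas : ∀ g, Measurable (T g))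
    (hTbij : ∀ g, Function.Bijective (T g))
    (ρ : G → X → ℝ) (hρmeas : ∀ g, Measurable (ρ g)) (hρpos : ∀ g x, 0 < ρ g x)
    (ν : Measure X) [IsProbabilityMeasure ν]
    (hν : ∀ g, ∀ A : Set X, MeasurableSet A →
      ν (T g '' A) = ∫⁻ x in A, ENNReal.ofReal (ρ g x) ∂ν) :
    (∀ (α : ℝ), α ∈ Set.Ioo (0 : ℝ) 1 → ∀ ν₁ ν₂ : Measure X,
        IsProbabilityMeasure ν₁ → IsProbabilityMeasure ν₂ →
        (∀ g, ∀ A : Set X, MeasurableSet A →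
          ν₁ (T g '' A) = ∫⁻ x in A, ENNReal.ofReal (ρ g x) ∂ν₁) →
        (∀ g, ∀ A : Set X, MeasurableSet A →
          ν₂ (T g '' A) = ∫⁻ x in A, ENNReal.ofReal (ρ g x) ∂ν₂) →
        ν = ENNReal.ofReal α • ν₁ + ENNReal.ofReal (1 - α) • ν₂ →
        ν₁ = ν ∧ ν₂ = ν)
    ↔ (∀ A : Set X, MeasurableSet A →
        (∀ g, ν (symmDiff A (T g '' A)) = 0) → ν A = 0 ∨ ν A = 1) :=
  isStronglyIndecomposable_iff_isWeaklyIndecomposable hν hTmeas hTbij hρmeas hρpos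

/-- A probability measure with Radon–Nikodym cocycle ρ is strongly indecomposable
iff it is weakly indecomposable. -/
theorem stmt3 {G X : Type*} [Group G] [MeasurableSpace X] [StandardBorelSpace X]
    (T : G → X → X) (hTmeas : ∀ g, Measurable (T g))
    (hTbij : ∀ g, Function.Bijective (T g))
    (hT1 : ∀ x, T 1 x = x) (hTmul : ∀ g h x, T (g * h) x = T g (T h x))
    (ρ : G → X → ℝ) (hρmeas : ∀ g, Measurable (ρ g)) (hρpos : ∀ g x, 0 < ρ g x)
    (hρcoc : ∀ g h x, ρ (g * h) x = ρ g (T h x) * ρ h x)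
    (ν : Measure X) [IsProbabilityMeasure ν]
    (hν : ∀ g, ∀ A : Set X, MeasurableSet A →
      ν (T g '' A) = ∫⁻ x in A, ENNReal.ofReal (ρ g x) ∂ν) :
    (∀ (α : ℝ), α ∈ Set.Ioo (0 : ℝ) 1 → ∀ ν₁ ν₂ : Measure X,
        IsProbabilityMeasure ν₁ → IsProbabilityMeasure ν₂ →
        (∀ g, ∀ A : Set X, MeasurableSet A →
          ν₁ (T g '' A) = ∫⁻ x in A, ENNReal.ofReal (ρ g x) ∂ν₁) →
        (∀ g, ∀ A : Set X, MeasurableSet A →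
          ν₂ (T g '' A) = ∫⁻ x in A, ENNReal.ofReal (ρ g x) ∂ν₂) →
        ν = ENNReal.ofReal α • ν₁ + ENNReal.ofReal (1 - α) • ν₂ →
        ν₁ = ν ∧ ν₂ = ν)
    ↔ (∀ A : Set X, MeasurableSet A →
        (∀ g, ν (symmDiff A (T g '' A)) = 0) → ν A = 0 ∨ ν A = 1) :=
  stmt3_general T hTmeas hTbij ρ hρmeas hρpos ν hν
end

section
/- Let K be a compact group with Haar probability measure μ_K acting measurably on a standard Borel space X, ρ a positive jointly measurable cocycle, ν a probability measure with Radon–Nikodym cocycle ρ, and φ ∈ L¹(X,ν). Define the averaging operator (A_K^ρ φ)(x) = (∫_K φ(T_k x)ρ(k,x)dμ_K(k)) / (∫_K ρ(k,x)dμ_K(k)) wherever the denominator is finite (and 0 otherwise). Then A_K^ρ φ = E(φ | I_K^ν) ν-almost surely, where I_K^ν is the ν-completion of the σ-algebra of K-invariant Borel sets. -/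
/-!
Write `A g = N g / D` with `N g x = ∫ g(T_k x) ρ(k, x) dμ_K` and `D x = ∫ ρ(k, x) dμ_K`.
The Radon–Nikodym identity says that `T_k` pushes `ρ(k, ·) ν` forward to `ν`; integrating over
`k` and using Fubini gives `∫ N g dν = ∫ g dν`, and the same for `ν` restricted to an invariant
set. Right invariance of `μ_K` and the cocycle identity multiply both `N g` and `D` by
`ρ(h, x)⁻¹` when `x` is replaced by `T_h x`, so `A g` is invariant. For an invariant `F` one has
`N F = F D`, so on every invariant set `B`,
`∫_B A g = ∫_B N (A g) = ∫_B (A g) D = ∫_B N g = ∫_B g`,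
which characterizes the conditional expectation.
-/

open MeasureTheory Set Filter Function
open scoped ENNReal

theorem isMulRightInvariant_of_isHaarMeasure_of_compactSpace {K : Type*} [Group K]
    [TopologicalSpace K] [IsTopologicalGroup K] [CompactSpace K] [MeasurableSpace K] [BorelSpace K]
    (μ : Measure K) [μ.IsHaarMeasure] [IsProbabilityMeasure μ] : μ.IsMulRightInvariant := by
  refine ⟨fun g => ?_⟩
  have : IsProbabilityMeasure (μ.map (· * g)) :=
    Measure.isProbabilityMeasure_map (measurable_mul_const g).aemeasurable
  exact Measure.isHaarMeasure_eq_of_isProbabilityMeasure _ μ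

theorem map_withDensity_eq_of_measure_image {X : Type*} [MeasurableSpace X] {ν : Measure X}
    {f : X → X} (hf : Measurable f) (hsurj : Surjective f) {w : X → ℝ≥0∞}
    (h : ∀ A, MeasurableSet A → ν (f '' A) = ∫⁻ x in A, w x ∂ν) :
    (ν.withDensity w).map f = ν := by
  ext B hB
  rw [Measure.map_apply hf hB, withDensity_apply _ (hf hB), ← h _ (hf hB),
    image_preimage_eq _ hsurj]

section Action

variable {K X : Type*} {T : K → X → X}

section Group

variable [Group K]

theorem act_inv_act (hT1 : ∀ x, T 1 x = x) (hTmul : ∀ g h x, T (g * h) x = T g (T h x))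
    (k : K) (x : X) : T k⁻¹ (T k x) = x := by
  rw [← hTmul, inv_mul_cancel, hT1]

theorem act_act_inv (hT1 : ∀ x, T 1 x = x) (hTmul : ∀ g h x, T (g * h) x = T g (T h x))
    (k : K) (x : X) : T k (T k⁻¹ x) = x := by
  simpa using act_inv_act hT1 hTmul k⁻¹ x

theorem surjective_act (hT1 : ∀ x, T 1 x = x) (hTmul : ∀ g h x, T (g * h) x = T g (T h x))
    (k : K) : Surjective (T k) :=
  fun y => ⟨T k⁻¹ y, act_act_inv hT1 hTmul k y⟩

theorem image_act_eq_preimage_inv (hT1 : ∀ x, T 1 x = x)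
    (hTmul : ∀ g h x, T (g * h) x = T g (T h x)) (k : K) (A : Set X) :
    T k '' A = T k⁻¹ ⁻¹' A :=
  congrFun (image_eq_preimage_of_inverse (act_inv_act hT1 hTmul k) (act_act_inv hT1 hTmul k)) A

end Group

variable [MeasurableSpace X]

abbrev invariantMeasurableSpace (T : K → X → X) : MeasurableSpace X :=
  MeasurableSpace.generateFrom {A | MeasurableSet A ∧ ∀ k, T k '' A = A}

theorem invariantMeasurableSpace_le : invariantMeasurableSpace T ≤ ‹MeasurableSpace X› :=
  MeasurableSpace.generateFrom_le fun _ hA => hA.1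

variable [Group K]

theorem preimage_act_of_measurableSet_invariant (hT1 : ∀ x, T 1 x = x)
    (hTmul : ∀ g h x, T (g * h) x = T g (T h x)) {s : Set X}
    (hs : MeasurableSet[invariantMeasurableSpace T] s) (k : K) : T k ⁻¹' s = s := by
  induction hs with
  | basic A hA => rw [← inv_inv k, ← image_act_eq_preimage_inv hT1 hTmul, hA.2]
  | empty => rfl
  | compl A _ hA => rw [preimage_compl, hA]
  | iUnion A _ hA => simp only [preimage_iUnion, hA]

theorem measurable_invariantMeasurableSpace {β : Type*} [MeasurableSpace β] {f : X → β}
    (hT1 : ∀ x, T 1 x = x) (hTmul : ∀ g h x, T (g * h) x = T g (T h x)) (hf : Measurable f)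
    (hinv : ∀ k x, f (T k x) = f x) : Measurable[invariantMeasurableSpace T] f := by
  refine fun t ht => MeasurableSpace.measurableSet_generateFrom ⟨hf ht, fun k => ?_⟩
  rw [image_act_eq_preimage_inv hT1 hTmul]
  ext x
  simp only [mem_preimage, hinv]

end Action

section Average

variable {K X : Type*} [MeasurableSpace K] {T : K → X → X} {ρ : K → X → ℝ} {μK : Measure K}

-- Where `k ↦ ρ(k, x)` is not integrable the Bochner integral and hence the quotient are `0`,
-- which is the convention of the statement.
noncomputable def cocycleAverage (μK : Measure K) (T : K → X → X) (ρ : K → X → ℝ) (g : X → ℝ)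
    (x : X) : ℝ :=
  (∫ k, g (T k x) * ρ k x ∂μK) / ∫ k, ρ k x ∂μK

theorem measurable_cocycleAverage [MeasurableSpace X] [SFinite μK] (hT : Measurable (uncurry T))
    (hρ : Measurable (uncurry ρ)) {g : X → ℝ} (hg : Measurable g) :
    Measurable (cocycleAverage μK T ρ g) := by
  have hN : Measurable fun x => ∫ k, g (T k x) * ρ k x ∂μK :=
    ((hg.comp (hT.comp measurable_swap)).mul
      (hρ.comp measurable_swap)).stronglyMeasurable.integral_prod_right'.measurable
  have hD : Measurable fun x => ∫ k, ρ k x ∂μK :=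
    (hρ.comp measurable_swap).stronglyMeasurable.integral_prod_right'.measurable
  exact hN.div hD

variable [Group K] [MeasurableMul K] [μK.IsMulRightInvariant]

theorem integral_comp_act_mul_cocycle
    (hTmul : ∀ g h x, T (g * h) x = T g (T h x))
    (hρcoc : ∀ g h x, ρ (g * h) x = ρ g (T h x) * ρ h x)
    (g : X → ℝ) (h : K) (x : X) (hρhx : ρ h x ≠ 0) :
    ∫ k, g (T k (T h x)) * ρ k (T h x) ∂μK = (∫ k, g (T k x) * ρ k x ∂μK) / ρ h x := by
  calc ∫ k, g (T k (T h x)) * ρ k (T h x) ∂μK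
      = ∫ k, g (T (k * h) x) * ρ (k * h) x / ρ h x ∂μK := by
        congr 1 with k
        rw [hTmul, hρcoc]
        field_simp
    _ = (∫ k, g (T k x) * ρ k x ∂μK) / ρ h x := by
        rw [integral_div, integral_mul_right_eq_self (fun k => g (T k x) * ρ k x)]

theorem cocycleAverage_act
    (hTmul : ∀ g h x, T (g * h) x = T g (T h x))
    (hρcoc : ∀ g h x, ρ (g * h) x = ρ g (T h x) * ρ h x)
    (hρpos : ∀ k x, 0 < ρ k x) (g : X → ℝ) (h : K) (x : X) :
    cocycleAverage μK T ρ g (T h x) = cocycleAverage μK T ρ g x := by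
  have hD := integral_comp_act_mul_cocycle (μK := μK) hTmul hρcoc (fun _ => 1) h x (hρpos h x).ne'
  simp only [one_mul] at hD
  rw [cocycleAverage, cocycleAverage, hD,
    integral_comp_act_mul_cocycle hTmul hρcoc g h x (hρpos h x).ne',
    div_div_div_cancel_right₀ (hρpos h x).ne']

end Average

-- `ν (T_k A) = ∫_A ρ(k, ·) dν` for all `A`, stated as: `T_k` pushes `ρ(k, ·) ν` forward to `ν`.
def HasRadonNikodymCocycle {K X : Type*} [MeasurableSpace X] (T : K → X → X) (ρ : K → X → ℝ)
    (ν : Measure X) : Prop :=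
  ∀ k, (ν.withDensity fun x => ENNReal.ofReal (ρ k x)).map (T k) = ν

namespace HasRadonNikodymCocycle

variable {K X : Type*} [MeasurableSpace X] {T : K → X → X} {ρ : K → X → ℝ} {ν : Measure X}

theorem restrict (h : HasRadonNikodymCocycle T ρ ν) (hT : ∀ k, Measurable (T k)) {s : Set X}
    (hs : MeasurableSet s) (hinv : ∀ k, T k ⁻¹' s = s) :
    HasRadonNikodymCocycle T ρ (ν.restrict s) := by
  intro k
  calc ((ν.restrict s).withDensity fun x => ENNReal.ofReal (ρ k x)).map (T k)
      = ((ν.withDensity fun x => ENNReal.ofReal (ρ k x)).restrict (T k ⁻¹' s)).map (T k) := by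
        rw [hinv k, restrict_withDensity hs]
    _ = ν.restrict s := by rw [← Measure.restrict_map (hT k) hs, h k]

theorem lintegral_comp_mul (h : HasRadonNikodymCocycle T ρ ν) (k : K) (hTk : Measurable (T k))
    (hρk : Measurable (ρ k)) {G : X → ℝ≥0∞} (hG : AEMeasurable G ν) :
    ∫⁻ x, G (T k x) * ENNReal.ofReal (ρ k x) ∂ν = ∫⁻ x, G x ∂ν := by
  calc ∫⁻ x, G (T k x) * ENNReal.ofReal (ρ k x) ∂ν
      = ∫⁻ x, G (T k x) ∂(ν.withDensity fun x => ENNReal.ofReal (ρ k x)) := by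
        rw [lintegral_withDensity_eq_lintegral_mul_non_measurable _ hρk.ennreal_ofReal
          (ae_of_all _ fun _ => ENNReal.ofReal_lt_top)]
        simp only [Pi.mul_apply, mul_comm]
    _ = ∫⁻ x, G x ∂ν := by
        rw [← lintegral_map' (by rwa [h k]) hTk.aemeasurable, h k]

theorem integral_comp_mul (h : HasRadonNikodymCocycle T ρ ν) (k : K) (hTk : Measurable (T k))
    (hρk : Measurable (ρ k)) (hρk0 : ∀ x, 0 ≤ ρ k x) {g : X → ℝ} (hg : AEStronglyMeasurable g ν) :
    ∫ x, g (T k x) * ρ k x ∂ν = ∫ x, g x ∂ν := by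
  calc ∫ x, g (T k x) * ρ k x ∂ν
      = ∫ x, g (T k x) ∂(ν.withDensity fun x => ENNReal.ofReal (ρ k x)) := by
        rw [integral_withDensity_eq_integral_toReal_smul hρk.ennreal_ofReal
          (ae_of_all _ fun _ => ENNReal.ofReal_lt_top)]
        simp only [ENNReal.toReal_ofReal (hρk0 _), smul_eq_mul, mul_comm]
    _ = ∫ x, g x ∂ν := by
        rw [← integral_map hTk.aemeasurable (by rwa [h k]), h k]

theorem quasiMeasurePreserving_act (h : HasRadonNikodymCocycle T ρ ν) (k : K)
    (hTk : Measurable (T k)) (hρk : Measurable (ρ k)) (hρk0 : ∀ x, 0 < ρ k x) :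
    Measure.QuasiMeasurePreserving (T k) ν ν := by
  refine ⟨hTk, ?_⟩
  have hac : ν ≪ ν.withDensity fun x => ENNReal.ofReal (ρ k x) :=
    withDensity_absolutelyContinuous' hρk.ennreal_ofReal.aemeasurable
      (ae_of_all _ fun x => (ENNReal.ofReal_pos.2 (hρk0 x)).ne')
  simpa only [h k] using hac.map hTk

section Prod

variable [MeasurableSpace K] [SFinite ν] {μK : Measure K}

theorem quasiMeasurePreserving_uncurry_act [SFinite μK] (h : HasRadonNikodymCocycle T ρ ν)
    (hT : Measurable (uncurry T)) (hρ : Measurable (uncurry ρ)) (hρpos : ∀ k x, 0 < ρ k x) :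
    Measure.QuasiMeasurePreserving (fun z : X × K => T z.2 z.1) (ν.prod μK) ν := by
  have hmeas : Measurable fun z : X × K => T z.2 z.1 := hT.comp measurable_swap
  refine ⟨hmeas, Measure.AbsolutelyContinuous.mk fun s hs hs0 => ?_⟩
  rw [Measure.map_apply hmeas hs, Measure.prod_apply_symm (hmeas hs)]
  change ∫⁻ k, ν (T k ⁻¹' s) ∂μK = 0
  simp_rw [fun k => (h.quasiMeasurePreserving_act k hT.of_uncurry_left hρ.of_uncurry_left
    (hρpos k)).preimage_null hs0]
  exact lintegral_zero

theorem cocycleAverage_congr_ae [SFinite μK] (h : HasRadonNikodymCocycle T ρ ν)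
    (hT : Measurable (uncurry T)) (hρ : Measurable (uncurry ρ)) (hρpos : ∀ k x, 0 < ρ k x)
    {φ ψ : X → ℝ} (hφψ : φ =ᵐ[ν] ψ) :
    cocycleAverage μK T ρ φ =ᵐ[ν] cocycleAverage μK T ρ ψ := by
  filter_upwards [Measure.ae_ae_of_ae_prod
    ((h.quasiMeasurePreserving_uncurry_act (μK := μK) hT hρ hρpos).ae hφψ)] with x hx
  rw [cocycleAverage, cocycleAverage, integral_congr_ae (hx.mono fun k hk => by rw [hk])]

variable [IsProbabilityMeasure μK]

theorem lintegral_lintegral_comp_mul (h : HasRadonNikodymCocycle T ρ ν)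
    (hT : Measurable (uncurry T)) (hρ : Measurable (uncurry ρ)) {G : X → ℝ≥0∞}
    (hG : Measurable G) :
    ∫⁻ x, ∫⁻ k, G (T k x) * ENNReal.ofReal (ρ k x) ∂μK ∂ν = ∫⁻ x, G x ∂ν := by
  rw [lintegral_lintegral_swap ((hG.comp (hT.comp measurable_swap)).mul
    (hρ.comp measurable_swap).ennreal_ofReal).aemeasurable]
  simp_rw [h.lintegral_comp_mul _ hT.of_uncurry_left hρ.of_uncurry_left hG.aemeasurable,
    lintegral_const, measure_univ, mul_one]

theorem integrable_prod_comp_mul (h : HasRadonNikodymCocycle T ρ ν)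
    (hT : Measurable (uncurry T)) (hρ : Measurable (uncurry ρ)) (hρ0 : ∀ k x, 0 ≤ ρ k x)
    {g : X → ℝ} (hg : Measurable g) (hgi : Integrable g ν) :
    Integrable (fun z : X × K => g (T z.2 z.1) * ρ z.2 z.1) (ν.prod μK) := by
  have hmeas : Measurable fun z : X × K => g (T z.2 z.1) * ρ z.2 z.1 :=
    (hg.comp (hT.comp measurable_swap)).mul (hρ.comp measurable_swap)
  refine ⟨hmeas.aestronglyMeasurable, ?_⟩
  calc ∫⁻ z, ‖g (T z.2 z.1) * ρ z.2 z.1‖ₑ ∂(ν.prod μK)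
      = ∫⁻ x, ∫⁻ k, ‖g (T k x)‖ₑ * ENNReal.ofReal (ρ k x) ∂μK ∂ν := by
        rw [lintegral_prod _ hmeas.enorm.aemeasurable]
        simp_rw [enorm_mul, Real.enorm_eq_ofReal (hρ0 _ _)]
    _ = ∫⁻ x, ‖g x‖ₑ ∂ν := h.lintegral_lintegral_comp_mul hT hρ hg.enorm
    _ < ∞ := hgi.2

theorem integral_integral_comp_mul (h : HasRadonNikodymCocycle T ρ ν)
    (hT : Measurable (uncurry T)) (hρ : Measurable (uncurry ρ)) (hρ0 : ∀ k x, 0 ≤ ρ k x)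
    {g : X → ℝ} (hg : Measurable g) (hgi : Integrable g ν) :
    ∫ x, ∫ k, g (T k x) * ρ k x ∂μK ∂ν = ∫ x, g x ∂ν := by
  rw [integral_integral_swap (h.integrable_prod_comp_mul hT hρ hρ0 hg hgi)]
  simp_rw [h.integral_comp_mul _ hT.of_uncurry_left hρ.of_uncurry_left (hρ0 _)
    hg.aestronglyMeasurable, integral_const, probReal_univ, one_smul]

theorem integral_mul_integral_cocycle (h : HasRadonNikodymCocycle T ρ ν)
    (hT : Measurable (uncurry T)) (hρ : Measurable (uncurry ρ)) (hρ0 : ∀ k x, 0 ≤ ρ k x)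
    {F : X → ℝ} (hF : Measurable F) (hFi : Integrable F ν) (hFinv : ∀ k x, F (T k x) = F x) :
    ∫ x, F x * ∫ k, ρ k x ∂μK ∂ν = ∫ x, F x ∂ν := by
  rw [← h.integral_integral_comp_mul (μK := μK) hT hρ hρ0 hF hFi]
  simp only [hFinv, integral_const_mul]

variable [IsFiniteMeasure ν]

theorem ae_integrable_cocycle (h : HasRadonNikodymCocycle T ρ ν) (hT : Measurable (uncurry T))
    (hρ : Measurable (uncurry ρ)) (hρ0 : ∀ k x, 0 ≤ ρ k x) :
    ∀ᵐ x ∂ν, Integrable (fun k => ρ k x) μK := by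
  simpa only [one_mul] using
    (h.integrable_prod_comp_mul (μK := μK) hT hρ hρ0 measurable_const
      (integrable_const (1 : ℝ))).prod_right_ae

theorem ae_integral_cocycle_pos (h : HasRadonNikodymCocycle T ρ ν) (hT : Measurable (uncurry T))
    (hρ : Measurable (uncurry ρ)) (hρpos : ∀ k x, 0 < ρ k x) :
    ∀ᵐ x ∂ν, 0 < ∫ k, ρ k x ∂μK := by
  filter_upwards [h.ae_integrable_cocycle (μK := μK) hT hρ fun k x => (hρpos k x).le] with x hx
  rw [integral_pos_iff_support_of_nonneg (fun k => (hρpos k x).le) hx,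
    support_eq_univ fun k => (hρpos k x).ne', measure_univ]
  exact one_pos

theorem lintegral_mul_ofReal_integral_cocycle (h : HasRadonNikodymCocycle T ρ ν)
    (hT : Measurable (uncurry T)) (hρ : Measurable (uncurry ρ)) (hρ0 : ∀ k x, 0 ≤ ρ k x)
    {F : X → ℝ≥0∞} (hF : Measurable F) (hFinv : ∀ k x, F (T k x) = F x) :
    ∫⁻ x, F x * ENNReal.ofReal (∫ k, ρ k x ∂μK) ∂ν = ∫⁻ x, F x ∂ν := by
  rw [← h.lintegral_lintegral_comp_mul (μK := μK) hT hρ hF]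
  refine lintegral_congr_ae ?_
  filter_upwards [h.ae_integrable_cocycle (μK := μK) hT hρ hρ0] with x hx
  rw [ofReal_integral_eq_lintegral_ofReal hx (ae_of_all _ (hρ0 · x)),
    ← lintegral_const_mul _ (hρ.of_uncurry_right.ennreal_ofReal)]
  simp only [hFinv]

variable [Group K] [MeasurableMul K] [μK.IsMulRightInvariant]

theorem integrable_cocycleAverage (h : HasRadonNikodymCocycle T ρ ν)
    (hTmul : ∀ g h x, T (g * h) x = T g (T h x)) (hT : Measurable (uncurry T))
    (hρcoc : ∀ g h x, ρ (g * h) x = ρ g (T h x) * ρ h x) (hρ : Measurable (uncurry ρ))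
    (hρpos : ∀ k x, 0 < ρ k x) {g : X → ℝ} (hg : Measurable g) (hgi : Integrable g ν) :
    Integrable (cocycleAverage μK T ρ g) ν := by
  have hρ0 : ∀ k x, 0 ≤ ρ k x := fun k x => (hρpos k x).le
  have hA := measurable_cocycleAverage (μK := μK) hT hρ hg
  refine ⟨hA.aestronglyMeasurable, ?_⟩
  calc ∫⁻ x, ‖cocycleAverage μK T ρ g x‖ₑ ∂ν
      = ∫⁻ x, ‖cocycleAverage μK T ρ g x‖ₑ * ENNReal.ofReal (∫ k, ρ k x ∂μK) ∂ν :=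
        (h.lintegral_mul_ofReal_integral_cocycle hT hρ hρ0 hA.enorm fun k x => by
          rw [cocycleAverage_act hTmul hρcoc hρpos]).symm
    _ = ∫⁻ x, ‖∫ k, g (T k x) * ρ k x ∂μK‖ₑ ∂ν := by
        refine lintegral_congr_ae ?_
        filter_upwards [h.ae_integral_cocycle_pos (μK := μK) hT hρ hρpos] with x hx
        rw [← Real.enorm_eq_ofReal hx.le, ← enorm_mul, cocycleAverage, div_mul_cancel₀ _ hx.ne']
    _ < ∞ := (h.integrable_prod_comp_mul hT hρ hρ0 hg hgi).integral_prod_left.2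

theorem integral_cocycleAverage (h : HasRadonNikodymCocycle T ρ ν)
    (hTmul : ∀ g h x, T (g * h) x = T g (T h x)) (hT : Measurable (uncurry T))
    (hρcoc : ∀ g h x, ρ (g * h) x = ρ g (T h x) * ρ h x) (hρ : Measurable (uncurry ρ))
    (hρpos : ∀ k x, 0 < ρ k x) {g : X → ℝ} (hg : Measurable g) (hgi : Integrable g ν) :
    ∫ x, cocycleAverage μK T ρ g x ∂ν = ∫ x, g x ∂ν := by
  have hρ0 : ∀ k x, 0 ≤ ρ k x := fun k x => (hρpos k x).le
  calc ∫ x, cocycleAverage μK T ρ g x ∂ν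
      = ∫ x, cocycleAverage μK T ρ g x * ∫ k, ρ k x ∂μK ∂ν :=
        (h.integral_mul_integral_cocycle hT hρ hρ0 (measurable_cocycleAverage hT hρ hg)
          (h.integrable_cocycleAverage hTmul hT hρcoc hρ hρpos hg hgi)
          (cocycleAverage_act hTmul hρcoc hρpos g)).symm
    _ = ∫ x, ∫ k, g (T k x) * ρ k x ∂μK ∂ν := by
        refine integral_congr_ae ?_
        filter_upwards [h.ae_integral_cocycle_pos (μK := μK) hT hρ hρpos] with x hx
        exact div_mul_cancel₀ _ hx.ne'
    _ = ∫ x, g x ∂ν := h.integral_integral_comp_mul hT hρ hρ0 hg hgi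

theorem cocycleAverage_ae_eq_condExp (h : HasRadonNikodymCocycle T ρ ν) (hT1 : ∀ x, T 1 x = x)
    (hTmul : ∀ g h x, T (g * h) x = T g (T h x)) (hT : Measurable (uncurry T))
    (hρcoc : ∀ g h x, ρ (g * h) x = ρ g (T h x) * ρ h x) (hρ : Measurable (uncurry ρ))
    (hρpos : ∀ k x, 0 < ρ k x) {g : X → ℝ} (hg : Measurable g) (hgi : Integrable g ν) :
    cocycleAverage μK T ρ g =ᵐ[ν] ν[g | invariantMeasurableSpace T] := by
  have hm := invariantMeasurableSpace_le (T := T)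
  have : SigmaFinite (ν.trim hm) := by
    have := isFiniteMeasure_trim hm (μ := ν)
    infer_instance
  refine ae_eq_condExp_of_forall_setIntegral_eq hm hgi
    (fun s _ _ => (h.integrable_cocycleAverage hTmul hT hρcoc hρ hρpos hg hgi).integrableOn)
    (fun s hs _ => ?_) ?_
  · have hrestrict := h.restrict (fun k => hT.of_uncurry_left) (hm s hs)
      (preimage_act_of_measurableSet_invariant hT1 hTmul hs)
    exact hrestrict.integral_cocycleAverage hTmul hT hρcoc hρ hρpos hg hgi.restrict
  · exact (measurable_invariantMeasurableSpace hT1 hTmul (measurable_cocycleAverage hT hρ hg)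
      (cocycleAverage_act hTmul hρcoc hρpos g)).stronglyMeasurable.aestronglyMeasurable

end Prod

end HasRadonNikodymCocycle

theorem stmt7_general {K X : Type*} [Group K] [TopologicalSpace K] [IsTopologicalGroup K]
    [CompactSpace K] [MeasurableSpace K] [BorelSpace K]
    [MeasurableSpace X]
    (μK : Measure K) [μK.IsHaarMeasure] [IsProbabilityMeasure μK]
    (T : K → X → X) (hTmeas : Measurable fun p : K × X => T p.1 p.2)
    (hT1 : ∀ x, T 1 x = x) (hTmul : ∀ g h x, T (g * h) x = T g (T h x))
    (ρ : K → X → ℝ) (hρmeas : Measurable fun p : K × X => ρ p.1 p.2)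
    (hρpos : ∀ g x, 0 < ρ g x)
    (hρcoc : ∀ g h x, ρ (g * h) x = ρ g (T h x) * ρ h x)
    (ν : Measure X) [IsProbabilityMeasure ν]
    (hRN : ∀ k, ∀ A : Set X, MeasurableSet A →
      ν (T k '' A) = ∫⁻ x in A, ENNReal.ofReal (ρ k x) ∂ν)
    (φ : X → ℝ) (hφ : Integrable φ ν) :
    (fun x => (∫ k, φ (T k x) * ρ k x ∂μK) / (∫ k, ρ k x ∂μK))
      =ᵐ[ν]
    ν[φ | MeasurableSpace.generateFrom
        {A : Set X | MeasurableSet A ∧ ∀ k, T k '' A = A}] := by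
  have := isMulRightInvariant_of_isHaarMeasure_of_compactSpace μK
  have hν : HasRadonNikodymCocycle T ρ ν := fun k =>
    map_withDensity_eq_of_measure_image hTmeas.of_uncurry_left (surjective_act hT1 hTmul k)
      (hRN k)
  have hφψ := hφ.1.ae_eq_mk
  calc cocycleAverage μK T ρ φ
      =ᵐ[ν] cocycleAverage μK T ρ (hφ.1.mk φ) :=
        hν.cocycleAverage_congr_ae hTmeas hρmeas hρpos hφψ
    _ =ᵐ[ν] ν[hφ.1.mk φ | invariantMeasurableSpace T] :=
        hν.cocycleAverage_ae_eq_condExp hT1 hTmul hTmeas hρcoc hρmeas hρpos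
          hφ.1.stronglyMeasurable_mk.measurable (hφ.congr hφψ)
    _ =ᵐ[ν] ν[φ | invariantMeasurableSpace T] := condExp_congr_ae hφψ.symm

/-- The averaging operator over a compact group equals the conditional expectation
with respect to the σ-algebra of K-invariant Borel sets. -/
theorem stmt7 {K X : Type*} [Group K] [TopologicalSpace K] [IsTopologicalGroup K]
    [CompactSpace K] [MeasurableSpace K] [BorelSpace K]
    [MeasurableSpace X] [StandardBorelSpace X]
    (μK : Measure K) [μK.IsHaarMeasure] [IsProbabilityMeasure μK]
    (T : K → X → X) (hTmeas : Measurable fun p : K × X => T p.1 p.2)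
    (hT1 : ∀ x, T 1 x = x) (hTmul : ∀ g h x, T (g * h) x = T g (T h x))
    (ρ : K → X → ℝ) (hρmeas : Measurable fun p : K × X => ρ p.1 p.2)
    (hρpos : ∀ g x, 0 < ρ g x)
    (hρcoc : ∀ g h x, ρ (g * h) x = ρ g (T h x) * ρ h x)
    (ν : Measure X) [IsProbabilityMeasure ν]
    (hRN : ∀ k, ∀ A : Set X, MeasurableSet A →
      ν (T k '' A) = ∫⁻ x in A, ENNReal.ofReal (ρ k x) ∂ν)
    (φ : X → ℝ) (hφ : Integrable φ ν) :
    (fun x => (∫ k, φ (T k x) * ρ k x ∂μK) / (∫ k, ρ k x ∂μK))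
      =ᵐ[ν]
    ν[φ | MeasurableSpace.generateFrom
        {A : Set X | MeasurableSet A ∧ ∀ k, T k '' A = A}] :=
  stmt7_general μK T hTmeas hT1 hTmul ρ hρmeas hρpos hρcoc ν hRN φ hφ
end

section
/- Let G = ⋃_n K(n) be an increasing union of compact metrizable groups acting measurably on a standard Borel space X, ρ a positive jointly measurable cocycle, and ν a probability measure with Radon–Nikodym cocycle ρ. If A is a Borel set almost invariant under G with respect to ν (ν(A △ T_g A) = 0 for all g ∈ G), then there exists a G-invariant Borel set Ã with ν(A △ Ã) = 0. -/
open MeasureTheory Set Filter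

open scoped ENNReal Pointwise symmDiff

/-!
Average the indicator of `A` over `K n` against the left `K n`-invariant probability `μ n`.
The result is exactly `K n`-invariant, and by Fubini and the almost invariance of `A` it
equals `χ_A` `ν`-almost everywhere. The set where these averages are eventually `1` is
therefore invariant under every `K m`, hence under `G`, and coincides with `A` off a null set.
-/

namespace MeasureTheory

variable {G X : Type*} [Group G] [MulAction G X] [MeasurableSpace G]

/-- `orbitAverage μ A x = ∫ χ_A (k⁻¹ • x) dμ(k)`. -/
def orbitAverage (μ : Measure G) (A : Set X) (x : X) : ℝ≥0∞ := μ {k | k⁻¹ • x ∈ A}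

theorem orbitAverage_smul [MeasurableMul G] {μ : Measure G} {g : G}
    (hμ : μ.map (g⁻¹ * ·) = μ) (A : Set X) (x : X) :
    orbitAverage μ A (g • x) = orbitAverage μ A x := by
  have hpre : {k : G | k⁻¹ • g • x ∈ A} = (g⁻¹ * ·) ⁻¹' {k | k⁻¹ • x ∈ A} := by
    ext k; simp [mul_smul]
  rw [orbitAverage, hpre, ← MeasurableEquiv.coe_mulLeft, ← MeasurableEquiv.map_apply,
    MeasurableEquiv.coe_mulLeft, hμ, orbitAverage]

variable [MeasurableSpace X] [MeasurableSMul₂ G X] [MeasurableInv G]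

theorem measurableSet_setOf_inv_smul_mem {A : Set X} (hA : MeasurableSet A) :
    MeasurableSet {p : X × G | p.2⁻¹ • p.1 ∈ A} :=
  (measurable_snd.inv.smul measurable_fst) hA

theorem measurable_orbitAverage (μ : Measure G) [SFinite μ] {A : Set X} (hA : MeasurableSet A) :
    Measurable (orbitAverage μ A) :=
  measurable_measure_prodMk_left (measurableSet_setOf_inv_smul_mem hA)

theorem ae_orbitAverage_eq_indicator {ν : Measure X} [SFinite ν] (μ : Measure G)
    [IsProbabilityMeasure μ] {A : Set X} (hA : MeasurableSet A)
    (hAinv : ∀ g : G, ν (A ∆ (g • A)) = 0) :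
    ∀ᵐ x ∂ν, orbitAverage μ A x = A.indicator 1 x := by
  set S : Set (X × G) := {p | p.2⁻¹ • p.1 ∈ A} ∆ {p | p.1 ∈ A}
  have hS : MeasurableSet S :=
    (measurableSet_setOf_inv_smul_mem hA).symmDiff (measurable_fst hA)
  have hSnull : ν.prod μ S = 0 := by
    rw [Measure.prod_apply_symm hS]
    have hsection : ∀ k : G, ν ((·, k) ⁻¹' S) = 0 := fun k =>
      measure_mono_null (fun x hx => by
        simp only [S, mem_preimage, mem_symmDiff, mem_ofPred_eq] at hx
        rw [mem_symmDiff, mem_smul_set_iff_inv_smul_mem]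
        tauto) (hAinv k)
    simp [hsection]
  filter_upwards [Measure.measure_ae_null_of_prod_null hSnull] with x hx
  have hconst : orbitAverage μ A x = μ {_k | x ∈ A} :=
    measure_congr (measure_symmDiff_eq_zero_iff.mp hx)
  by_cases hxA : x ∈ A <;> simp [hconst, hxA]

end MeasureTheory

section EventuallySet

variable {ι X : Type*}

theorem MeasurableSet.setOf_eventually_atTop [MeasurableSpace X] {p : ℕ → X → Prop}
    (hp : ∀ n, MeasurableSet {x | p n x}) : MeasurableSet {x | ∀ᶠ n in atTop, p n x} := by
  have hliminf : {x | ∀ᶠ n in atTop, p n x} = liminf (fun n => {x | p n x}) atTop := by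
    ext x; simp [mem_liminf_iff_eventually_mem]
  exact hliminf ▸ measurableSet_liminf hp

theorem smul_setOf_eventually {G : Type*} [Group G] [MulAction G X] {l : Filter ι}
    {p : ι → X → Prop} (hp : ∀ g : G, ∀ᶠ i in l, ∀ x, p i (g • x) ↔ p i x) (g : G) :
    g • {x | ∀ᶠ i in l, p i x} = {x | ∀ᶠ i in l, p i x} := by
  ext y
  rw [mem_smul_set_iff_inv_smul_mem]
  exact eventually_congr ((hp g⁻¹).mono fun i hi => hi y)

theorem ae_eq_setOf_eventually_eq_one {l : Filter ι} [l.NeBot] [MeasurableSpace X]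
    {ν : Measure X} {A : Set X} {f : ι → X → ℝ≥0∞}
    (hf : ∀ᵐ x ∂ν, ∀ i, f i x = A.indicator 1 x) :
    A =ᵐ[ν] {x | ∀ᶠ i in l, f i x = 1} := by
  filter_upwards [hf] with x hx
  change (x ∈ A) = ∀ᶠ i in l, f i x = 1
  simp [hx, indicator_eq_one_iff_mem]

end EventuallySet

theorem stmt13_general {G X : Type*} [Group G] [TopologicalSpace G] [IsTopologicalGroup G]
    [MeasurableSpace G] [BorelSpace G]
    [MeasurableSpace X]
    (K : ℕ → Subgroup G) (hKmono : Monotone K)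
    (hKunion : (⋃ n, (K n : Set G)) = Set.univ)
    (μ : ℕ → Measure G) (hμprob : ∀ n, IsProbabilityMeasure (μ n))
    (hμinv : ∀ n, ∀ g ∈ K n, (μ n).map (fun k => g * k) = μ n)
    (T : G → X → X) (hTmeas : Measurable fun p : G × X => T p.1 p.2)
    (hT1 : ∀ x, T 1 x = x) (hTmul : ∀ g h x, T (g * h) x = T g (T h x))
    (ν : Measure X) [IsProbabilityMeasure ν]
    (A : Set X) (hA : MeasurableSet A)
    (hainv : ∀ g : G, ν (symmDiff A (T g '' A)) = 0) :
    ∃ B : Set X, MeasurableSet B ∧ (∀ g : G, T g '' B = B) ∧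
      ν (symmDiff A B) = 0 := by
  let _ : MulAction G X := { smul := T, one_smul := hT1, mul_smul := hTmul }
  have : MeasurableSMul₂ G X := ⟨hTmeas⟩
  have hK : ∀ g : G, ∀ᶠ n in atTop, g ∈ K n := fun g => by
    obtain ⟨m, hm⟩ := mem_iUnion.mp (eq_univ_iff_forall.mp hKunion g)
    exact eventually_atTop.mpr ⟨m, fun n hn => hKmono hn hm⟩
  refine ⟨{x | ∀ᶠ n in atTop, orbitAverage (μ n) A x = 1}, ?_, fun g => ?_, ?_⟩
  · refine .setOf_eventually_atTop fun n => ?_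
    have := hμprob n
    exact measurable_orbitAverage (μ n) hA (measurableSet_singleton 1)
  · refine smul_setOf_eventually (fun g => (hK g).mono fun n hn x => ?_) g
    rw [orbitAverage_smul (hμinv n g⁻¹ (inv_mem hn))]
  · have hae : ∀ᵐ x ∂ν, ∀ n, orbitAverage (μ n) A x = A.indicator 1 x :=
      ae_all_iff.mpr fun n =>
        have := hμprob n
        ae_orbitAverage_eq_indicator (μ n) hA hainv
    exact measure_symmDiff_eq_zero_iff.mpr (ae_eq_setOf_eventually_eq_one hae)

/-- For an action of an inductively compact group, every ν-almost-invariant Borel set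
coincides, up to a ν-null set, with a genuinely G-invariant Borel set. -/
theorem stmt13 {G X : Type*} [Group G] [TopologicalSpace G] [IsTopologicalGroup G]
    [MeasurableSpace G] [BorelSpace G]
    [MeasurableSpace X] [StandardBorelSpace X]
    (K : ℕ → Subgroup G) (hKmono : Monotone K)
    (hKcompact : ∀ n, IsCompact (K n : Set G))
    (hKmetr : ∀ n, TopologicalSpace.MetrizableSpace (K n))
    (hKunion : (⋃ n, (K n : Set G)) = Set.univ)
    (μ : ℕ → Measure G) (hμprob : ∀ n, IsProbabilityMeasure (μ n))
    (hμsupp : ∀ n, μ n (K n : Set G) = 1)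
    (hμinv : ∀ n, ∀ g ∈ K n, (μ n).map (fun k => g * k) = μ n)
    (T : G → X → X) (hTmeas : Measurable fun p : G × X => T p.1 p.2)
    (hT1 : ∀ x, T 1 x = x) (hTmul : ∀ g h x, T (g * h) x = T g (T h x))
    (ρ : G → X → ℝ) (hρmeas : Measurable fun p : G × X => ρ p.1 p.2)
    (hρpos : ∀ g x, 0 < ρ g x)
    (hρcoc : ∀ g h x, ρ (g * h) x = ρ g (T h x) * ρ h x)
    (ν : Measure X) [IsProbabilityMeasure ν]
    (hRN : ∀ g, ∀ A : Set X, MeasurableSet A →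
      ν (T g '' A) = ∫⁻ x in A, ENNReal.ofReal (ρ g x) ∂ν)
    (A : Set X) (hA : MeasurableSet A)
    (hainv : ∀ g : G, ν (symmDiff A (T g '' A)) = 0) :
    ∃ B : Set X, MeasurableSet B ∧ (∀ g : G, T g '' B = B) ∧
      ν (symmDiff A B) = 0 :=
  stmt13_general K hKmono hKunion μ hμprob hμinv T hTmeas hT1 hTmul ν A hA hainv
end

section
/- Let G = ⋃_n K(n) be an inductively compact group acting measurably on a standard Borel space X, ρ a positive jointly measurable cocycle. If a probability measure ν with Radon–Nikodym cocycle ρ is ergodic (every G-invariant Borel set has ν-measure 0 or 1), then ν is indecomposable in 𝔐(𝔗,ρ): ν = αν₁ + (1-α)ν₂ with α ∈ (0,1) and ν₁,ν₂ ∈ 𝔐(𝔗,ρ) implies ν₁ = ν₂ = ν. -/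
/-!
If `ν = α ν₁ + (1 - α) ν₂`, then `ν₁ ≪ ν`, and since `ν` and `ν₁` have the same Radon–Nikodym
cocycle, the density `dν₁/dν` is `ν`-almost invariant under every `g`. Averaging over the
`K n`-invariant probability measures `μ n` replaces the almost invariant set `{dν₁/dν > 1}` by a
genuinely invariant one, so by ergodicity it is null or conull. As `dν₁/dν` has integral `1`, it
is `1` almost everywhere, i.e. `ν₁ = ν`; symmetrically `ν₂ = ν`.
-/

open MeasureTheory Set Filter
open scoped ENNReal Pointwise

lemma map_withDensity_of_leftInverse {α β : Type*} [MeasurableSpace α] [MeasurableSpace β]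
    {μ : Measure α} {f : α → ℝ≥0∞} {φ : β → α} {ψ : α → β} (hf : Measurable f)
    (hφ : Measurable φ) (hψ : Measurable ψ) (h : Function.LeftInverse φ ψ) :
    (μ.withDensity f).map ψ = (μ.map ψ).withDensity (f ∘ φ) := by
  ext s hs
  rw [Measure.map_apply hψ hs, withDensity_apply _ (hψ hs), withDensity_apply _ hs,
    setLIntegral_map hs (hf.comp hφ) hψ]
  simp only [Function.comp_apply, h _]

lemma ae_eq_one_of_lintegral_eq_one {α : Type*} [MeasurableSpace α] {ν : Measure α}
    [IsProbabilityMeasure ν] {f : α → ℝ≥0∞} (hf : Measurable f) (hint : ∫⁻ x, f x ∂ν = 1)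
    (h : ν {x | 1 < f x} = 0 ∨ ν {x | 1 < f x} = 1) : f =ᵐ[ν] 1 := by
  rcases h with h0 | h1
  · have hle : f ≤ᵐ[ν] 1 := by
      rw [EventuallyLE, ae_iff]
      simpa only [Pi.one_apply, not_le] using h0
    exact ae_eq_of_ae_le_of_lintegral_le hle (by simp [hint]) aemeasurable_const (by simp [hint])
  · have hge : 1 ≤ᵐ[ν] f := by
      rw [EventuallyLE, ae_iff]
      refine measure_mono_null (fun x hx => ?_)
        ((prob_compl_eq_zero_iff (measurableSet_lt measurable_const hf)).2 h1)
      simp only [Pi.one_apply, not_le, mem_ofPred_eq, mem_compl_iff] at hx ⊢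
      exact hx.not_gt
    exact (ae_eq_of_ae_le_of_lintegral_le hge (by simp) hf.aemeasurable (by simp [hint])).symm

section RadonNikodymCocycle

variable {G X : Type*} [Group G] [MeasurableSpace X] [MulAction G X]

/-- `ν ∈ 𝔐(𝔗, r)` in the paper's notation. -/
def IsRNCocycle (r : G → X → ℝ≥0∞) (ν : Measure X) : Prop :=
  ∀ g (A : Set X), MeasurableSet A → ν (g • A) = ∫⁻ x in A, r g x ∂ν

lemma IsRNCocycle.map_smul_inv [MeasurableConstSMul G X] {r : G → X → ℝ≥0∞} {ν : Measure X}
    (hν : IsRNCocycle r ν) (g : G) : ν.map (g⁻¹ • ·) = ν.withDensity (r g) := by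
  ext s hs
  rw [Measure.map_apply (measurable_const_smul _) hs, preimage_smul_inv, hν g s hs,
    withDensity_apply _ hs]

lemma IsRNCocycle.rnDeriv_smul_ae_eq [MeasurableConstSMul G X] {r : G → X → ℝ≥0∞}
    {ν ν₁ : Measure X} [SigmaFinite ν] [SigmaFinite ν₁] (hν : IsRNCocycle r ν)
    (hν₁ : IsRNCocycle r ν₁) (hac : ν₁ ≪ ν) (g : G) (hr : Measurable (r g))
    (hr0 : ∀ x, r g x ≠ 0) (hrtop : ∀ x, r g x ≠ ∞) :
    ∀ᵐ x ∂ν, ν₁.rnDeriv ν (g • x) = ν₁.rnDeriv ν x := by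
  set f := ν₁.rnDeriv ν
  have hf : Measurable f := Measure.measurable_rnDeriv ν₁ ν
  have hfν : ν.withDensity f = ν₁ := Measure.withDensity_rnDeriv_eq ν₁ ν hac
  have hfg : Measurable fun x => f (g • x) := hf.comp (measurable_const_smul g)
  have key : ν.withDensity (f * r g) = ν.withDensity (r g * fun x => f (g • x)) := calc
    ν.withDensity (f * r g) = ν₁.withDensity (r g) := by rw [withDensity_mul ν hf hr, hfν]
    _ = ν₁.map (g⁻¹ • ·) := (hν₁.map_smul_inv g).symm
    _ = (ν.map (g⁻¹ • ·)).withDensity fun x => f (g • x) := by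
      rw [← hfν]
      exact map_withDensity_of_leftInverse hf (measurable_const_smul g)
        (measurable_const_smul _) (smul_inv_smul g)
    _ = ν.withDensity (r g * fun x => f (g • x)) := by
      rw [hν.map_smul_inv g, withDensity_mul ν hr hfg]
  filter_upwards [(withDensity_eq_iff_of_sigmaFinite (hf.mul hr).aemeasurable
    (hr.mul hfg).aemeasurable).1 key] with x hx
  rw [Pi.mul_apply, Pi.mul_apply, mul_comm] at hx
  exact ((ENNReal.mul_right_inj (hr0 x) (hrtop x)).1 hx).symm

end RadonNikodymCocycle

section OrbitMass

variable {G X : Type*} [Group G] [MeasurableSpace G] [MulAction G X]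

def orbitMass (μ : Measure G) (A : Set X) (x : X) : ℝ≥0∞ := μ {k | k⁻¹ • x ∈ A}

variable [MeasurableInv G] [MeasurableSpace X] [MeasurableSMul₂ G X]

lemma measurableSet_inv_smul_mem {A : Set X} (hA : MeasurableSet A) :
    MeasurableSet {p : G × X | p.1⁻¹ • p.2 ∈ A} :=
  (measurable_fst.inv.smul measurable_snd) hA

lemma measurable_orbitMass (μ : Measure G) [SFinite μ] {A : Set X} (hA : MeasurableSet A) :
    Measurable (orbitMass μ A) :=
  measurable_measure_prodMk_right (measurableSet_inv_smul_mem hA)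

lemma orbitMass_smul [MeasurableMul G] {μ : Measure G} {g : G} (hμ : μ.map (g⁻¹ * ·) = μ)
    {A : Set X} (hA : MeasurableSet A) (x : X) : orbitMass μ A (g • x) = orbitMass μ A x := by
  have hsec : MeasurableSet {k : G | k⁻¹ • x ∈ A} :=
    measurable_prodMk_right (measurableSet_inv_smul_mem hA)
  have hpre : {k : G | k⁻¹ • g • x ∈ A} = (g⁻¹ * ·) ⁻¹' {k | k⁻¹ • x ∈ A} := by
    ext k
    simp [mul_smul]
  rw [orbitMass, orbitMass, hpre, ← Measure.map_apply (measurable_const_mul _) hsec, hμ]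

lemma orbitMass_ae_eq_indicator (μ : Measure G) [IsProbabilityMeasure μ] (ν : Measure X)
    [SFinite ν] {A : Set X} (hA : MeasurableSet A) (hae : ∀ g : G, ∀ᵐ x ∂ν, g • x ∈ A ↔ x ∈ A) :
    orbitMass μ A =ᵐ[ν] A.indicator 1 := by
  have hmeas : MeasurableSet {p : G × X | p.1⁻¹ • p.2 ∈ A ↔ p.2 ∈ A} :=
    (measurableSet_inv_smul_mem hA).iff (measurable_snd hA)
  filter_upwards [(Measure.ae_ae_comm (μ := μ) (ν := ν) hmeas).1 (ae_of_all _ fun k => hae k⁻¹)]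
    with x hx
  have hconst : {k : G | k⁻¹ • x ∈ A} =ᵐ[μ] {_k : G | x ∈ A} := eventuallyEq_set.2 hx
  rw [orbitMass, measure_congr hconst]
  by_cases hxA : x ∈ A <;> simp [hxA]

/-- For `g ∈ K n`, `orbitMass (μ n) A` is `g`-invariant, and it is a.e. the indicator of `A`; so
the set where it is eventually `1` is invariant and a.e. equal to `A`. -/
lemma exists_smul_invariant_ae_eq [MeasurableMul G] (K : ℕ → Subgroup G) (hKmono : Monotone K)
    (hKunion : (⋃ n, (K n : Set G)) = univ) (μ : ℕ → Measure G)
    [∀ n, IsProbabilityMeasure (μ n)] (hμinv : ∀ n, ∀ g ∈ K n, (μ n).map (fun k => g * k) = μ n)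
    (ν : Measure X) [SFinite ν] {A : Set X} (hA : MeasurableSet A)
    (hae : ∀ g : G, ∀ᵐ x ∂ν, g • x ∈ A ↔ x ∈ A) :
    ∃ B : Set X, MeasurableSet B ∧ (∀ g : G, g • B = B) ∧ B =ᵐ[ν] A := by
  set B := liminf (fun n => {x | orbitMass (μ n) A x = 1}) atTop
  have hBinv : ∀ (g : G) (x : X), g • x ∈ B ↔ x ∈ B := by
    intro g x
    obtain ⟨m, hm⟩ := iUnion_eq_univ_iff.1 hKunion g
    simp only [B, mem_liminf_iff_eventually_mem, mem_ofPred_eq]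
    refine eventually_congr ((eventually_ge_atTop m).mono fun n hn => ?_)
    rw [orbitMass_smul (hμinv n _ ((K n).inv_mem (hKmono hn hm))) hA]
  refine ⟨B, MeasurableSet.measurableSet_liminf fun n => measurable_orbitMass (μ n) hA
    (measurableSet_singleton 1), fun g => ?_, ?_⟩
  · rw [← preimage_smul_inv]
    ext x
    exact hBinv g⁻¹ x
  · refine eventuallyEq_set.2 ?_
    filter_upwards [ae_all_iff.2 fun n => orbitMass_ae_eq_indicator (μ n) ν hA hae] with x hx
    simp only [B, mem_liminf_iff_eventually_mem, mem_ofPred_eq, hx]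
    by_cases hxA : x ∈ A
    · simp [hxA]
    · simp only [indicator_of_notMem hxA, zero_ne_one, eventually_const, hxA]

end OrbitMass

theorem IsRNCocycle.eq_of_absolutelyContinuous_of_ergodic {G X : Type*} [Group G]
    [MeasurableSpace G] [MeasurableMul G] [MeasurableInv G] [MeasurableSpace X] [MulAction G X]
    [MeasurableSMul₂ G X] (K : ℕ → Subgroup G) (hKmono : Monotone K)
    (hKunion : (⋃ n, (K n : Set G)) = univ) (μ : ℕ → Measure G)
    [∀ n, IsProbabilityMeasure (μ n)] (hμinv : ∀ n, ∀ g ∈ K n, (μ n).map (fun k => g * k) = μ n)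
    {r : G → X → ℝ≥0∞} (hr : ∀ g, Measurable (r g)) (hr0 : ∀ g x, r g x ≠ 0)
    (hrtop : ∀ g x, r g x ≠ ∞) {ν ν₁ : Measure X} [IsProbabilityMeasure ν]
    [IsProbabilityMeasure ν₁] (hν : IsRNCocycle r ν) (hν₁ : IsRNCocycle r ν₁)
    (herg : ∀ A : Set X, MeasurableSet A → (∀ g : G, g • A = A) → ν A = 0 ∨ ν A = 1)
    (hac : ν₁ ≪ ν) : ν₁ = ν := by
  set f := ν₁.rnDeriv ν
  have hf : Measurable f := Measure.measurable_rnDeriv ν₁ ν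
  have hfinv (g : G) : ∀ᵐ x ∂ν, g • x ∈ {x | 1 < f x} ↔ x ∈ {x | 1 < f x} :=
    (hν.rnDeriv_smul_ae_eq hν₁ hac g (hr g) (hr0 g) (hrtop g)).mono fun x hx => by
      simp only [mem_ofPred_eq, f, hx]
  obtain ⟨B, hB, hBinv, hBA⟩ := exists_smul_invariant_ae_eq K hKmono hKunion μ hμinv ν
    (measurableSet_lt measurable_const hf) hfinv
  have hf1 : f =ᵐ[ν] 1 := ae_eq_one_of_lintegral_eq_one hf
    (by rw [Measure.lintegral_rnDeriv hac, measure_univ])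
    (measure_congr hBA ▸ herg B hB hBinv)
  rw [← Measure.withDensity_rnDeriv_eq ν₁ ν hac, withDensity_congr_ae hf1, withDensity_one]

theorem stmt14_general {G X : Type*} [Group G] [TopologicalSpace G] [IsTopologicalGroup G]
    [MeasurableSpace G] [BorelSpace G]
    [MeasurableSpace X]
    (K : ℕ → Subgroup G) (hKmono : Monotone K)
    (hKunion : (⋃ n, (K n : Set G)) = Set.univ)
    (μ : ℕ → Measure G) (hμprob : ∀ n, IsProbabilityMeasure (μ n))
    (hμinv : ∀ n, ∀ g ∈ K n, (μ n).map (fun k => g * k) = μ n)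
    (T : G → X → X) (hTmeas : Measurable fun p : G × X => T p.1 p.2)
    (hT1 : ∀ x, T 1 x = x) (hTmul : ∀ g h x, T (g * h) x = T g (T h x))
    (ρ : G → X → ℝ) (hρmeas : Measurable fun p : G × X => ρ p.1 p.2)
    (hρpos : ∀ g x, 0 < ρ g x)
    (ν : Measure X) [IsProbabilityMeasure ν]
    (hRN : ∀ g, ∀ A : Set X, MeasurableSet A →
      ν (T g '' A) = ∫⁻ x in A, ENNReal.ofReal (ρ g x) ∂ν)
    (herg : ∀ A : Set X, MeasurableSet A → (∀ g : G, T g '' A = A) →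
      ν A = 0 ∨ ν A = 1) :
    ∀ (α : ℝ), α ∈ Set.Ioo (0 : ℝ) 1 → ∀ ν₁ ν₂ : Measure X,
      IsProbabilityMeasure ν₁ → IsProbabilityMeasure ν₂ →
      (∀ g, ∀ A : Set X, MeasurableSet A →
        ν₁ (T g '' A) = ∫⁻ x in A, ENNReal.ofReal (ρ g x) ∂ν₁) →
      (∀ g, ∀ A : Set X, MeasurableSet A →
        ν₂ (T g '' A) = ∫⁻ x in A, ENNReal.ofReal (ρ g x) ∂ν₂) →
      ν = ENNReal.ofReal α • ν₁ + ENNReal.ofReal (1 - α) • ν₂ →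
      ν₁ = ν ∧ ν₂ = ν := by
  intro α hα ν₁ ν₂ hν₁ hν₂ hRN₁ hRN₂ hdec
  let _ : MulAction G X := { smul := T, one_smul := hT1, mul_smul := hTmul }
  have : MeasurableSMul₂ G X := ⟨hTmeas⟩
  have := hμprob
  have hr (g : G) : Measurable fun x => ENNReal.ofReal (ρ g x) :=
    (hρmeas.comp measurable_prodMk_left).ennreal_ofReal
  have hcomponent (a b : ℝ) (ν' ν'' : Measure X) (ha : 0 < a) [IsProbabilityMeasure ν']
      (hRN' : IsRNCocycle (fun g x => ENNReal.ofReal (ρ g x)) ν')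
      (hdec : ν = ENNReal.ofReal a • ν' + ENNReal.ofReal b • ν'') : ν' = ν :=
    IsRNCocycle.eq_of_absolutelyContinuous_of_ergodic K hKmono hKunion μ hμinv hr
      (fun g x => ENNReal.ofReal_ne_zero_iff.2 (hρpos g x)) (fun _ _ => ENNReal.ofReal_ne_top)
      hRN hRN' herg (hdec ▸ (Measure.absolutelyContinuous_smul
        (ENNReal.ofReal_ne_zero_iff.2 ha)).add_right _)
  exact ⟨hcomponent α (1 - α) ν₁ ν₂ hα.1 hRN₁ hdec,
    hcomponent (1 - α) α ν₂ ν₁ (sub_pos.2 hα.2) hRN₂ (hdec.trans (add_comm _ _))⟩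

/-- For an action of an inductively compact group, every ergodic probability measure with
Radon–Nikodym cocycle ρ is indecomposable in 𝔐(𝔗,ρ). -/
theorem stmt14 {G X : Type*} [Group G] [TopologicalSpace G] [IsTopologicalGroup G]
    [MeasurableSpace G] [BorelSpace G]
    [MeasurableSpace X] [StandardBorelSpace X]
    (K : ℕ → Subgroup G) (hKmono : Monotone K)
    (hKcompact : ∀ n, IsCompact (K n : Set G))
    (hKmetr : ∀ n, TopologicalSpace.MetrizableSpace (K n))
    (hKunion : (⋃ n, (K n : Set G)) = Set.univ)
    (μ : ℕ → Measure G) (hμprob : ∀ n, IsProbabilityMeasure (μ n))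
    (hμsupp : ∀ n, μ n (K n : Set G) = 1)
    (hμinv : ∀ n, ∀ g ∈ K n, (μ n).map (fun k => g * k) = μ n)
    (T : G → X → X) (hTmeas : Measurable fun p : G × X => T p.1 p.2)
    (hT1 : ∀ x, T 1 x = x) (hTmul : ∀ g h x, T (g * h) x = T g (T h x))
    (ρ : G → X → ℝ) (hρmeas : Measurable fun p : G × X => ρ p.1 p.2)
    (hρpos : ∀ g x, 0 < ρ g x)
    (hρcoc : ∀ g h x, ρ (g * h) x = ρ g (T h x) * ρ h x)
    (ν : Measure X) [IsProbabilityMeasure ν]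
    (hRN : ∀ g, ∀ A : Set X, MeasurableSet A →
      ν (T g '' A) = ∫⁻ x in A, ENNReal.ofReal (ρ g x) ∂ν)
    (herg : ∀ A : Set X, MeasurableSet A → (∀ g : G, T g '' A = A) →
      ν A = 0 ∨ ν A = 1) :
    ∀ (α : ℝ), α ∈ Set.Ioo (0 : ℝ) 1 → ∀ ν₁ ν₂ : Measure X,
      IsProbabilityMeasure ν₁ → IsProbabilityMeasure ν₂ →
      (∀ g, ∀ A : Set X, MeasurableSet A →
        ν₁ (T g '' A) = ∫⁻ x in A, ENNReal.ofReal (ρ g x) ∂ν₁) →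
      (∀ g, ∀ A : Set X, MeasurableSet A →
        ν₂ (T g '' A) = ∫⁻ x in A, ENNReal.ofReal (ρ g x) ∂ν₂) →
      ν = ENNReal.ofReal α • ν₁ + ENNReal.ofReal (1 - α) • ν₂ →
      ν₁ = ν ∧ ν₂ = ν :=
  stmt14_general K hKmono hKunion μ hμprob hμinv T hTmeas hT1 hTmul ρ hρmeas hρpos ν hRN herg
end

section
/- Let K be a compact metric group acting continuously on a compact metric space X, and let ρ: K × X → ℝ_{>0} be a cocycle continuous in k for every fixed x, with sup_{k∈K} ρ(k,x) measurable in x. Let ν be a Borel probability measure on X and K' ⊆ K a dense subgroup such that ν ∘ T_k = ρ(k,·)·ν for all k ∈ K'. Then ν ∘ T_k = ρ(k,·)·ν for all k ∈ K. -/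
/-! For `k` in the dense set `S`, the measures `ν ∘ T_k = ν.map T_{k⁻¹}` and `ρ(k,·)·ν` agree.
Tested against a bounded continuous function, the first side depends continuously on `k`
(dominated convergence), the second lower semicontinuously (Fatou), so `ρ(k,·)·ν ≤ ν ∘ T_k`
for every `k`. Applying this at `k⁻¹` to the function `ρ(k, T_{k⁻¹}·)`, whose product with
`ρ(k⁻¹,·)` is `1` by the cocycle identity, shows that both sides have mass `ν X`; a finite
measure below another one of the same mass equals it. -/

open MeasureTheory Set Filter Topology
open scoped ENNReal NNReal BoundedContinuousFunction Pointwise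

theorem LowerSemicontinuous.le_of_forall_mem_dense_le {α γ : Type*} [TopologicalSpace α]
    [CompleteLinearOrder γ] [TopologicalSpace γ] [OrderTopology γ] {f g : α → γ} {s : Set α}
    (hf : LowerSemicontinuous f) (hg : Continuous g) (hs : Dense s)
    (hfg : ∀ x ∈ s, f x ≤ g x) : f ≤ g := fun x ↦ by
  have : (𝓝[s] x).NeBot := mem_closure_iff_nhdsWithin_neBot.1 (hs x)
  calc f x ≤ liminf f (𝓝 x) := hf.le_liminf x
    _ ≤ liminf f (𝓝[s] x) := liminf_le_liminf_of_le nhdsWithin_le_nhds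
    _ ≤ liminf g (𝓝[s] x) := liminf_le_liminf (eventually_nhdsWithin_of_forall hfg)
    _ = g x := ((hg.tendsto x).mono_left nhdsWithin_le_nhds).liminf_eq

namespace MeasureTheory

section ParametricLIntegral

variable {K α : Type*} [TopologicalSpace K] [FirstCountableTopology K] [MeasurableSpace α]
  {F : K → α → ℝ≥0∞}

theorem lowerSemicontinuous_lintegral (μ : Measure α) (hF : ∀ k, Measurable (F k))
    (hF_lsc : ∀ a, LowerSemicontinuous fun k ↦ F k a) :
    LowerSemicontinuous fun k ↦ ∫⁻ a, F k a ∂μ := by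
  refine lowerSemicontinuous_iff_le_liminf.2 fun k ↦ ?_
  calc ∫⁻ a, F k a ∂μ ≤ ∫⁻ a, liminf (fun k' ↦ F k' a) (𝓝 k) ∂μ :=
        lintegral_mono fun a ↦ (hF_lsc a).le_liminf k
    _ ≤ liminf (fun k' ↦ ∫⁻ a, F k' a ∂μ) (𝓝 k) := lintegral_liminf_le hF

theorem continuous_lintegral_of_le_const (μ : Measure α) [IsFiniteMeasure μ] {C : ℝ≥0∞}
    (hC : C ≠ ∞) (hF : ∀ k, Measurable (F k)) (hF_le : ∀ k a, F k a ≤ C)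
    (hF_cont : ∀ a, Continuous fun k ↦ F k a) :
    Continuous fun k ↦ ∫⁻ a, F k a ∂μ :=
  continuous_iff_continuousAt.2 fun k ↦
    tendsto_lintegral_filter_of_dominated_convergence (fun _ ↦ C) (.of_forall hF)
      (.of_forall fun k ↦ .of_forall (hF_le k))
      (by simpa using ENNReal.mul_ne_top hC (measure_ne_top μ univ))
      (.of_forall fun a ↦ (hF_cont a).continuousAt)

end ParametricLIntegral

namespace Measure

variable {X : Type*} [TopologicalSpace X] [TopologicalSpace.PseudoMetrizableSpace X]
  [MeasurableSpace X] [BorelSpace X]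

theorem le_of_forall_lintegral_le {μ ν : Measure X} [IsFiniteMeasure ν]
    (h : ∀ f : X →ᵇ ℝ≥0, ∫⁻ x, f x ∂μ ≤ ∫⁻ x, f x ∂ν) : μ ≤ ν := by
  have : IsFiniteMeasure μ := ⟨by simpa using (h 1).trans_lt (by simp)⟩
  have h_closed {F : Set X} (hF : IsClosed F) : μ F ≤ ν F :=
    le_of_tendsto_of_tendsto' (HasOuterApproxClosed.tendsto_lintegral_apprSeq hF μ)
      (HasOuterApproxClosed.tendsto_lintegral_apprSeq hF ν) fun n ↦ h _
  refine le_iff.2 fun A hA ↦ ?_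
  rw [hA.measure_eq_iSup_isClosed_of_ne_top (measure_ne_top μ A)]
  exact iSup₂_le fun F hFA ↦ iSup_le fun hF ↦ (h_closed hF).trans (measure_mono hFA)

end Measure

section Cocycle

variable {K X : Type*} [Group K] [MulAction K X] {ρ : K → X → ℝ}

theorem cocycle_one_apply (hρpos : ∀ k x, 0 < ρ k x)
    (hρ : ∀ g h x, ρ (g * h) x = ρ g (h • x) * ρ h x) (x : X) : ρ 1 x = 1 := by
  have h := hρ 1 1 x
  rw [one_mul, one_smul] at h
  exact mul_left_cancel₀ (hρpos 1 x).ne' (by rw [mul_one, ← h])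

theorem cocycle_apply_inv_smul_mul (hρpos : ∀ k x, 0 < ρ k x)
    (hρ : ∀ g h x, ρ (g * h) x = ρ g (h • x) * ρ h x) (k : K) (x : X) :
    ρ k (k⁻¹ • x) * ρ k⁻¹ x = 1 := by
  rw [← hρ, mul_inv_cancel, cocycle_one_apply hρpos hρ]

variable [MeasurableSpace X] [MeasurableConstSMul K X] {ν : Measure X}

theorem map_smul_inv_eq_withDensity_iff (k : K) (f : X → ℝ≥0∞) :
    ν.map (k⁻¹ • ·) = ν.withDensity f ↔
      ∀ A : Set X, MeasurableSet A → ν (k • A) = ∫⁻ x in A, f x ∂ν := by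
  refine Measure.ext_iff.trans (forall₂_congr fun A hA ↦ ?_)
  rw [Measure.map_apply (measurable_const_smul k⁻¹) hA, preimage_smul_inv,
    withDensity_apply _ hA]

theorem withDensity_apply_univ_of_le_map (hρpos : ∀ k x, 0 < ρ k x)
    (hρ : ∀ g h x, ρ (g * h) x = ρ g (h • x) * ρ h x) (hρmeas : ∀ k, Measurable (ρ k))
    (hle : ∀ k : K, ν.withDensity (fun x ↦ ENNReal.ofReal (ρ k x)) ≤ ν.map (k⁻¹ • ·)) (k : K) :
    ν.withDensity (fun x ↦ ENNReal.ofReal (ρ k x)) univ = ν univ := by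
  refine le_antisymm
    ((hle k univ).trans_eq (Measure.map_apply (measurable_const_smul _) .univ)) ?_
  set g : X → ℝ≥0∞ := fun y ↦ ENNReal.ofReal (ρ k (k⁻¹ • y))
  have hg : Measurable g := ((hρmeas k).comp (measurable_const_smul k⁻¹)).ennreal_ofReal
  calc ν univ = ∫⁻ x, ENNReal.ofReal (ρ k⁻¹ x) * g x ∂ν := by
        simp_rw [g, ← ENNReal.ofReal_mul (hρpos _ _).le, mul_comm (ρ k⁻¹ _),
          cocycle_apply_inv_smul_mul hρpos hρ, ENNReal.ofReal_one, lintegral_one]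
    _ = ∫⁻ y, g y ∂(ν.withDensity fun x ↦ ENNReal.ofReal (ρ k⁻¹ x)) :=
        (lintegral_withDensity_eq_lintegral_mul _ (hρmeas k⁻¹).ennreal_ofReal hg).symm
    _ ≤ ∫⁻ y, g y ∂(ν.map (k⁻¹⁻¹ • ·)) := lintegral_mono' (hle k⁻¹) le_rfl
    _ = ν.withDensity (fun x ↦ ENNReal.ofReal (ρ k x)) univ := by
        simp [lintegral_map hg (measurable_const_smul _), g]

end Cocycle

section DenseSubset

variable {K X : Type*} [Group K] [TopologicalSpace K] [FirstCountableTopology K]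
  [ContinuousInv K] [TopologicalSpace X] [MeasurableSpace X] [BorelSpace X] [MulAction K X]
  [ContinuousSMul K X]
  {ρ : K → X → ℝ} {ν : Measure X} [IsFiniteMeasure ν]

theorem lintegral_withDensity_le_lintegral_map_smul_inv (hρmeas : ∀ k, Measurable (ρ k))
    (hρcont : ∀ x, Continuous fun k ↦ ρ k x) {S : Set K} (hS : Dense S)
    (hSeq : ∀ k ∈ S, ν.map (k⁻¹ • ·) = ν.withDensity fun x ↦ ENNReal.ofReal (ρ k x))
    (k : K) (f : X →ᵇ ℝ≥0) :
    ∫⁻ x, f x ∂(ν.withDensity fun x ↦ ENNReal.ofReal (ρ k x)) ≤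
      ∫⁻ x, f x ∂(ν.map (k⁻¹ • ·)) := by
  have hf : Measurable fun x ↦ (f x : ℝ≥0∞) := f.continuous.measurable.coe_nnreal_ennreal
  have h_dens (k : K) : ∫⁻ x, f x ∂(ν.withDensity fun x ↦ ENNReal.ofReal (ρ k x)) =
      ∫⁻ x, ENNReal.ofReal (ρ k x) * f x ∂ν :=
    lintegral_withDensity_eq_lintegral_mul _ (hρmeas k).ennreal_ofReal hf
  have h_map (k : K) : ∫⁻ x, f x ∂(ν.map (k⁻¹ • ·)) = ∫⁻ x, f (k⁻¹ • x) ∂ν :=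
    lintegral_map hf (measurable_const_smul k⁻¹)
  have h_lsc : LowerSemicontinuous fun k ↦ ∫⁻ x, ENNReal.ofReal (ρ k x) * f x ∂ν :=
    lowerSemicontinuous_lintegral ν (fun k ↦ (hρmeas k).ennreal_ofReal.mul hf) fun x ↦
      ((ENNReal.continuous_mul_const ENNReal.coe_ne_top).comp
        (ENNReal.continuous_ofReal.comp (hρcont x))).lowerSemicontinuous
  have h_cont : Continuous fun k : K ↦ ∫⁻ x, f (k⁻¹ • x) ∂ν :=
    continuous_lintegral_of_le_const ν (C := nndist f 0) ENNReal.coe_ne_top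
      (fun k ↦ hf.comp (measurable_const_smul k⁻¹))
      (fun k x ↦ ENNReal.coe_le_coe.2 (BoundedContinuousFunction.NNReal.upper_bound f _))
      fun x ↦ ENNReal.continuous_coe.comp
        (f.continuous.comp (continuous_inv.smul continuous_const))
  rw [h_dens, h_map]
  refine h_lsc.le_of_forall_mem_dense_le h_cont hS (fun k hk ↦ ?_) k
  rw [← h_dens, ← h_map, hSeq k hk]

theorem map_smul_inv_eq_withDensity_of_dense [TopologicalSpace.PseudoMetrizableSpace X]
    (hρpos : ∀ k x, 0 < ρ k x) (hρ : ∀ g h x, ρ (g * h) x = ρ g (h • x) * ρ h x)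
    (hρmeas : ∀ k, Measurable (ρ k)) (hρcont : ∀ x, Continuous fun k ↦ ρ k x) {S : Set K}
    (hS : Dense S)
    (hSeq : ∀ k ∈ S, ν.map (k⁻¹ • ·) = ν.withDensity fun x ↦ ENNReal.ofReal (ρ k x))
    (k : K) : ν.map (k⁻¹ • ·) = ν.withDensity fun x ↦ ENNReal.ofReal (ρ k x) := by
  have hle (k : K) : ν.withDensity (fun x ↦ ENNReal.ofReal (ρ k x)) ≤ ν.map (k⁻¹ • ·) :=
    Measure.le_of_forall_lintegral_le
      (lintegral_withDensity_le_lintegral_map_smul_inv hρmeas hρcont hS hSeq k)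
  have := isFiniteMeasure_of_le _ (hle k)
  refine (Measure.eq_of_le_of_measure_univ_eq (hle k) ?_).symm
  rw [withDensity_apply_univ_of_le_map hρpos hρ hρmeas hle,
    Measure.map_apply (measurable_const_smul _) .univ, preimage_univ]

end DenseSubset

end MeasureTheory

theorem stmt16_general {K X : Type*} [Group K] [MetricSpace K] [IsTopologicalGroup K]
    [MetricSpace X] [MeasurableSpace X] [BorelSpace X]
    (T : K → X → X) (hTcont : Continuous fun p : K × X => T p.1 p.2)
    (hT1 : ∀ x, T 1 x = x) (hTmul : ∀ g h x, T (g * h) x = T g (T h x))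
    (ρ : K → X → ℝ) (hρmeas : ∀ k, Measurable (ρ k)) (hρpos : ∀ k x, 0 < ρ k x)
    (hρcoc : ∀ g h x, ρ (g * h) x = ρ g (T h x) * ρ h x)
    (hρcont : ∀ x, Continuous fun k => ρ k x)
    (ν : Measure X) [IsProbabilityMeasure ν]
    (S : Subgroup K) (hSdense : Dense (S : Set K))
    (hS : ∀ k ∈ S, ∀ A : Set X, MeasurableSet A →
      ν (T k '' A) = ∫⁻ x in A, ENNReal.ofReal (ρ k x) ∂ν) :
    ∀ k : K, ∀ A : Set X, MeasurableSet A →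
      ν (T k '' A) = ∫⁻ x in A, ENNReal.ofReal (ρ k x) ∂ν := by
  let _ : MulAction K X := { smul := T, one_smul := hT1, mul_smul := hTmul }
  have : ContinuousSMul K X := ⟨hTcont⟩
  intro k
  -- for this action `k • A` unfolds to `T k '' A`
  exact (map_smul_inv_eq_withDensity_iff k _).1 <|
    map_smul_inv_eq_withDensity_of_dense hρpos hρcoc hρmeas hρcont hSdense
      (fun k hk ↦ (map_smul_inv_eq_withDensity_iff k _).2 (hS k hk)) k

/-- If the Radon–Nikodym identity ν∘T_k = ρ(k,·)·ν holds for all k in a dense subgroup of a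
compact metric group acting continuously on a compact metric space, and ρ is continuous in k
with measurable supremum, then the identity holds for all k ∈ K. -/
theorem stmt16 {K X : Type*} [Group K] [MetricSpace K] [IsTopologicalGroup K]
    [CompactSpace K] [MeasurableSpace K] [BorelSpace K]
    [MetricSpace X] [CompactSpace X] [MeasurableSpace X] [BorelSpace X]
    (T : K → X → X) (hTcont : Continuous fun p : K × X => T p.1 p.2)
    (hT1 : ∀ x, T 1 x = x) (hTmul : ∀ g h x, T (g * h) x = T g (T h x))
    (ρ : K → X → ℝ) (hρmeas : ∀ k, Measurable (ρ k)) (hρpos : ∀ k x, 0 < ρ k x)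
    (hρcoc : ∀ g h x, ρ (g * h) x = ρ g (T h x) * ρ h x)
    (hρcont : ∀ x, Continuous fun k => ρ k x)
    (hsup : Measurable fun x => ⨆ k : K, ρ k x)
    (ν : Measure X) [IsProbabilityMeasure ν]
    (S : Subgroup K) (hSdense : Dense (S : Set K))
    (hS : ∀ k ∈ S, ∀ A : Set X, MeasurableSet A →
      ν (T k '' A) = ∫⁻ x in A, ENNReal.ofReal (ρ k x) ∂ν) :
    ∀ k : K, ∀ A : Set X, MeasurableSet A →
      ν (T k '' A) = ∫⁻ x in A, ENNReal.ofReal (ρ k x) ∂ν :=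
  stmt16_general T hTcont hT1 hTmul ρ hρmeas hρpos hρcoc hρcont ν S hSdense hS
end

section
/- Let X be a standard Borel space and f: X → ℝ_{>0} a positive Borel function. The map P_f(ν) = (f·ν)/ν(f), defined on the set 𝔐_{f,1}^∞ of σ-finite Borel measures ν with ∫f dν = 1, is a Borel isomorphism onto the space 𝔐(X) of Borel probability measures, with inverse μ ↦ (1/f)·μ. -/
open MeasureTheory Set
open scoped ENNReal

/-- The map P_f(ν) = f·ν (on σ-finite measures with ∫ f dν = 1) is a Borel isomorphism onto
the space of Borel probability measures, with inverse μ ↦ (1/f)·μ. -/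
theorem stmt18 {X : Type*} [MeasurableSpace X] [StandardBorelSpace X]
    (f : X → ℝ) (hfmeas : Measurable f) (hfpos : ∀ x, 0 < f x) :
    ∃ e : {ν : Measure X // SigmaFinite ν ∧ ∫⁻ x, ENNReal.ofReal (f x) ∂ν = 1}
        ≃ᵐ {μ : Measure X // IsProbabilityMeasure μ},
      (∀ ν, (e ν : Measure X)
          = (ν : Measure X).withDensity fun x => ENNReal.ofReal (f x))
      ∧ (∀ μ, (e.symm μ : Measure X)
          = (μ : Measure X).withDensity fun x => (ENNReal.ofReal (f x))⁻¹) := by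
  set g : X → ℝ≥0∞ := fun x => ENNReal.ofReal (f x) with hgdef
  have hgmeas : Measurable g := hfmeas.ennreal_ofReal
  have hg0 : ∀ x, g x ≠ 0 := fun x => by
    simp [hgdef, ENNReal.ofReal_eq_zero, not_le, hfpos x]
  have hgtop : ∀ x, g x ≠ ∞ := fun x => ENNReal.ofReal_ne_top
  have hinvtop : ∀ x, (g x)⁻¹ ≠ ∞ := fun x => by
    simp [ENNReal.inv_ne_top, hg0 x]
  -- forward map
  have hto : ∀ ν : {ν : Measure X // SigmaFinite ν ∧ ∫⁻ x, g x ∂ν = 1},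
      IsProbabilityMeasure ((ν : Measure X).withDensity g) := by
    rintro ⟨ν, hsf, hint⟩
    exact ⟨by rw [withDensity_apply _ MeasurableSet.univ, Measure.restrict_univ]; exact hint⟩
  have hinv : ∀ μ : {μ : Measure X // IsProbabilityMeasure μ},
      SigmaFinite ((μ : Measure X).withDensity g⁻¹) ∧
        ∫⁻ x, g x ∂((μ : Measure X).withDensity g⁻¹) = 1 := by
    rintro ⟨μ, hμ⟩
    constructor
    · exact SigmaFinite.withDensity_of_ne_top' hinvtop
    · have h1 : ∫⁻ x, g x ∂(μ.withDensity fun x => (g x)⁻¹) = ∫⁻ x, ((fun x => (g x)⁻¹) * g) x ∂μ :=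
        lintegral_withDensity_eq_lintegral_mul μ hgmeas.inv hgmeas
      show ∫⁻ x, g x ∂(μ.withDensity fun x => (g x)⁻¹) = 1
      rw [h1]
      have : ((fun x => (g x)⁻¹) * g) = fun _ => (1 : ℝ≥0∞) := by
        funext x
        exact ENNReal.inv_mul_cancel (hg0 x) (hgtop x)
      rw [this, lintegral_one]
      exact hμ.measure_univ
  refine ⟨⟨⟨fun ν => ⟨(ν : Measure X).withDensity g, hto ν⟩,
      fun μ => ⟨(μ : Measure X).withDensity g⁻¹, hinv μ⟩, ?_, ?_⟩, ?_, ?_⟩, fun ν => rfl,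
      fun μ => rfl⟩
  · rintro ⟨ν, hsf, hint⟩
    ext1
    exact withDensity_inv_same hgmeas (ae_of_all _ hg0) (ae_of_all _ hgtop)
  · rintro ⟨μ, hμ⟩
    ext1
    have := withDensity_inv_same (μ := μ) hgmeas.inv
      (ae_of_all _ fun x => by simp [ENNReal.inv_ne_zero, hgtop x])
      (ae_of_all _ hinvtop)
    simpa using this
  · refine Measurable.subtype_mk ?_
    refine Measure.measurable_of_measurable_coe _ fun s hs => ?_
    simp_rw [withDensity_apply _ hs, ← lintegral_indicator hs _]
    exact (Measure.measurable_lintegral (hgmeas.indicator hs)).comp measurable_subtype_coe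
  · refine Measurable.subtype_mk ?_
    refine Measure.measurable_of_measurable_coe _ fun s hs => ?_
    simp_rw [withDensity_apply _ hs, ← lintegral_indicator hs _]
    exact (Measure.measurable_lintegral (hgmeas.inv.indicator hs)).comp measurable_subtype_coe
end
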